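/- arXiv:2209.13347 — 13 statements merged into one kernel-verified Lean document; each statement's English description precedes it below -/
import Mathlib

section
/- If f and g are nonzero univariate real polynomials that are non-negative on all of ℝ, then gcd(f,g), f/gcd(f,g), and g/gcd(f,g) are also non-negative on all of ℝ. -/
/-!
A nonzero real polynomial is non-negative on `ℝ` exactly when its leading coefficient is positive
and each of its real roots has even multiplicity. The gcd is monic and its multiplicity at `a` is
the minimum of those of `f` and `g`; the multiplicities of `f / gcd f g` are differences of even
numbers, and its leading coefficient is that of `f`.
-/

open Polynomial Filter

namespace Polynomial

theorem eventually_atTop_eval_pos {P : ℝ[X]} (hP : 0 < P.leadingCoeff) :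
    ∀ᶠ x in atTop, 0 < P.eval x :=
  P.isEquivalent_atTop_lead.eventually_pos <|
    (eventually_gt_atTop 0).mono fun _ hx => mul_pos hP (pow_pos hx _)

theorem leadingCoeff_pos_of_eval_nonneg {P : ℝ[X]} (hP : P ≠ 0) (h : ∀ x, 0 ≤ P.eval x) :
    0 < P.leadingCoeff := by
  by_contra! hneg
  have hneg' : 0 < (-P).leadingCoeff := by
    rw [leadingCoeff_neg]
    exact neg_pos.2 (hneg.lt_of_ne (leadingCoeff_ne_zero.2 hP))
  obtain ⟨x, hx⟩ := (eventually_atTop_eval_pos hneg').exists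
  rw [eval_neg] at hx
  linarith [h x]

theorem eval_pos_of_forall_eval_ne_zero {P : ℝ[X]} (hroot : ∀ x, P.eval x ≠ 0)
    (hP : 0 < P.leadingCoeff) (x : ℝ) : 0 < P.eval x := by
  obtain ⟨y, hy, hxy⟩ := ((eventually_atTop_eval_pos hP).and (eventually_ge_atTop x)).exists
  by_contra! hx
  obtain ⟨z, -, hz⟩ := intermediate_value_Icc hxy P.continuous.continuousOn ⟨hx, hy.le⟩
  exact hroot z hz

theorem eval_nonneg_of_even_rootMultiplicity {P : ℝ[X]} (hP : 0 < P.leadingCoeff)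
    (heven : ∀ a, Even (rootMultiplicity a P)) (x : ℝ) : 0 ≤ P.eval x := by
  classical
  obtain ⟨Q, hPQ, -, hQ⟩ := exists_prod_multiset_X_sub_C_mul P
  have hmonic : (P.roots.map fun a => X - C a).prod.Monic :=
    monic_multiset_prod_of_monic _ _ fun a _ => monic_X_sub_C a
  have hQlead : 0 < Q.leadingCoeff := by
    rwa [← hPQ, leadingCoeff_mul, hmonic.leadingCoeff, one_mul] at hP
  have hQroot : ∀ y, Q.eval y ≠ 0 := fun y hy => by
    have : y ∈ Q.roots := (mem_roots (leadingCoeff_ne_zero.1 hQlead.ne')).2 hy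
    simp [hQ] at this
  have hprod : 0 ≤ (P.roots.map fun a => X - C a).prod.eval x := by
    rw [eval_multiset_prod, Multiset.map_map, Finset.prod_multiset_map_count]
    refine Finset.prod_nonneg fun a _ => ?_
    rw [count_roots]
    exact (heven a).pow_nonneg _
  rw [← hPQ, eval_mul]
  exact mul_nonneg hprod (eval_pos_of_forall_eval_ne_zero hQroot hQlead x).le

/-- If `a` had odd multiplicity `2k+1`, then `P = ((X - a)^k)^2 * ((X - a) * Q)` with `Q(a) ≠ 0`;
the second factor is then non-negative with a zero at `a`, so by Fermat its derivative there,
`Q(a)`, vanishes. -/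
theorem even_rootMultiplicity_of_eval_nonneg {P : ℝ[X]} (h : ∀ x, 0 ≤ P.eval x) (a : ℝ) :
    Even (rootMultiplicity a P) := by
  rcases eq_or_ne P 0 with rfl | hP
  · simp
  by_contra hodd
  obtain ⟨k, hk⟩ := Nat.not_even_iff_odd.1 hodd
  have hQa := eval_divByMonic_pow_rootMultiplicity_ne_zero a hP
  have hPQ := pow_mul_divByMonic_rootMultiplicity_eq P a
  generalize P /ₘ _ = Q at hQa hPQ
  have hfactor : P = ((X - C a) ^ k) ^ 2 * ((X - C a) * Q) := by
    rw [← hPQ, hk]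
    ring
  have hmin : IsMinOn (fun y => ((X - C a) * Q).eval y) Set.univ a := by
    intro y _
    simp only [Set.mem_ofPred_eq, eval_mul, eval_sub, eval_X, eval_C, sub_self, zero_mul]
    rcases eq_or_ne y a with rfl | hya
    · simp
    have hpos : 0 < ((y - a) ^ k) ^ 2 := by positivity
    have := h y
    rw [hfactor] at this
    simp only [eval_mul, eval_pow, eval_sub, eval_X, eval_C] at this
    exact nonneg_of_mul_nonneg_right (by linarith) hpos
  have hderiv := (hmin.isLocalMin univ_mem).deriv_eq_zero
  rw [Polynomial.deriv, derivative_mul] at hderiv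
  simp [hQa] at hderiv


theorem eval_nonneg_iff {P : ℝ[X]} (hP : P ≠ 0) :
    (∀ x, 0 ≤ P.eval x) ↔ 0 < P.leadingCoeff ∧ ∀ a, Even (rootMultiplicity a P) :=
  ⟨fun h => ⟨leadingCoeff_pos_of_eval_nonneg hP h, even_rootMultiplicity_of_eval_nonneg h⟩,
    fun h => eval_nonneg_of_even_rootMultiplicity h.1 h.2⟩

theorem rootMultiplicity_gcd {R : Type*} [CommRing R] [IsDomain R] [GCDMonoid R[X]]
    {p q : R[X]} (hp : p ≠ 0) (hq : q ≠ 0) (a : R) :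
    rootMultiplicity a (gcd p q) = min (rootMultiplicity a p) (rootMultiplicity a q) := by
  have hdvd := pow_rootMultiplicity_dvd (gcd p q) a
  refine le_antisymm (le_min ?_ ?_) ((le_rootMultiplicity_iff (gcd_ne_zero_of_left hp)).2 ?_)
  · exact (le_rootMultiplicity_iff hp).2 (hdvd.trans (gcd_dvd_left p q))
  · exact (le_rootMultiplicity_iff hq).2 (hdvd.trans (gcd_dvd_right p q))
  · exact dvd_gcd ((pow_dvd_pow _ (min_le_left _ _)).trans (pow_rootMultiplicity_dvd p a))
      ((pow_dvd_pow _ (min_le_right _ _)).trans (pow_rootMultiplicity_dvd q a))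

theorem eval_nonneg_of_eval_mul_nonneg {P Q : ℝ[X]} (hPQ : P * Q ≠ 0)
    (h : ∀ x, 0 ≤ (P * Q).eval x) (hP : ∀ x, 0 ≤ P.eval x) (x : ℝ) : 0 ≤ Q.eval x := by
  obtain ⟨hlead, heven⟩ := (eval_nonneg_iff hPQ).1 h
  obtain ⟨hPlead, hPeven⟩ := (eval_nonneg_iff (left_ne_zero_of_mul hPQ)).1 hP
  refine eval_nonneg_of_even_rootMultiplicity ?_ (fun a => ?_) x
  · rw [leadingCoeff_mul] at hlead
    exact pos_of_mul_pos_right hlead hPlead.le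
  · have := heven a
    rw [rootMultiplicity_mul hPQ] at this
    exact (Nat.even_add.1 this).1 (hPeven a)

end Polynomial

theorem stmt0 (f g : Polynomial ℝ) (hf : f ≠ 0) (hg : g ≠ 0)
    (hfpos : ∀ x : ℝ, 0 ≤ f.eval x) (hgpos : ∀ x : ℝ, 0 ≤ g.eval x) :
    (∀ x : ℝ, 0 ≤ (gcd f g).eval x) ∧
    (∀ x : ℝ, 0 ≤ (f / gcd f g).eval x) ∧
    (∀ x : ℝ, 0 ≤ (g / gcd f g).eval x) := by
  have hd : gcd f g ≠ 0 := gcd_ne_zero_of_left hf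
  have hgcd : ∀ x, 0 ≤ (gcd f g).eval x := by
    refine (eval_nonneg_iff hd).2 ⟨?_, fun a => ?_⟩
    · rw [← normalize_gcd, (monic_normalize hd).leadingCoeff]
      exact one_pos
    · rw [rootMultiplicity_gcd hf hg]
      rcases min_choice (rootMultiplicity a f) (rootMultiplicity a g) with h | h <;> rw [h]
      exacts [even_rootMultiplicity_of_eval_nonneg hfpos a,
        even_rootMultiplicity_of_eval_nonneg hgpos a]
  have hquot : ∀ p : ℝ[X], p ≠ 0 → (∀ x, 0 ≤ p.eval x) → gcd f g ∣ p →
      ∀ x, 0 ≤ (p / gcd f g).eval x := by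
    intro p hp hpos hdvd
    rw [← EuclideanDomain.mul_div_cancel' hd hdvd] at hp hpos
    exact eval_nonneg_of_eval_mul_nonneg hp hpos hgcd
  exact ⟨hgcd, hquot f hf hfpos (gcd_dvd_left f g), hquot g hg hgpos (gcd_dvd_right f g)⟩
end

section
/- Let h₁, ..., hₙ ∈ ℝ[X] with gcd(h₁,...,hₙ) = 1, and let B ⊆ ℝ. If the equation f₁h₁ + ⋯ + fₙhₙ = 0 has no solution with all fᵢ strictly positive on B, then there exists t in the closure of B such that h₁(t), ..., hₙ(t) are all non-negative or all non-positive. -/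
/-!
Suppose the `h i` take values of both signs at every point of `closure B`. On the compact part of
`closure B` with `|x| ≤ T + 1`, a polynomial `θ` close to a step function gives combinations with
`a i = θ(h i)`, `b i = θ(-h i)` and `∑ a i h i > 0 > ∑ b i h i`; then
`f i = b i * ∑ a j h j - a i * ∑ b j h j`, a syzygy for any `a`, `b`, is positive there. Beyond `T`
no nonzero `h i` vanishes, so signs are constant on each half-line and some `h i * h k` is negative
on the part of `B` there; a syzygy with entries `-h i * h k` away from `i`, `k` is then bounded
below on it. Adding `(x² / (T (T + 1)))^p` times the second syzygy to the first, for large `p`,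
gives a syzygy positive on all of `B`: the weight is negligible for `|x| ≤ T` and dominates
polynomial growth for `|x| ≥ T + 1`.
-/

open Polynomial Filter Set Topology

variable {ι : Type*} [Fintype ι]

theorem exists_pos_syzygy_of_pos_combinations {S : Set ℝ} {h a b : ι → ℝ[X]}
    (ha : ∀ i, ∀ x ∈ S, 0 < (a i).eval x) (hb : ∀ i, ∀ x ∈ S, 0 < (b i).eval x)
    (hA : ∀ x ∈ S, 0 < (∑ i, a i * h i).eval x) (hB : ∀ x ∈ S, (∑ i, b i * h i).eval x < 0) :
    ∃ f : ι → ℝ[X], (∀ i, ∀ x ∈ S, 0 < (f i).eval x) ∧ ∑ i, f i * h i = 0 := by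
  refine ⟨fun i => b i * ∑ j, a j * h j - a i * ∑ j, b j * h j, fun i x hx => ?_, ?_⟩
  · rw [eval_sub, eval_mul, eval_mul]
    nlinarith [mul_pos (hb i x hx) (hA x hx), mul_pos (ha i x hx) (neg_pos.2 (hB x hx))]
  · calc ∑ i, (b i * ∑ j, a j * h j - a i * ∑ j, b j * h j) * h i
        = ∑ i, ((∑ j, a j * h j) * (b i * h i) - (∑ j, b j * h j) * (a i * h i)) :=
          Finset.sum_congr rfl fun i _ => by ring
      _ = 0 := by
          rw [Finset.sum_sub_distrib, ← Finset.mul_sum, ← Finset.mul_sum, mul_comm, sub_self]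

theorem exists_poly_step_approx {M η ε : ℝ} (hM : 0 < M) (hη : 0 < η) (hε : 0 < ε) :
    ∃ θ : ℝ[X], ∀ s, |s| ≤ M →
      0 < θ.eval s ∧ (s ≤ 0 → θ.eval s ≤ ε) ∧ (η ≤ s → 1 ≤ θ.eval s) := by
  obtain ⟨N, hN⟩ :=
    pow_unbounded_of_one_lt ε⁻¹ (lt_add_of_pos_right 1 (by positivity : 0 < η / (2 * M)))
  refine ⟨C ε * (1 + C (2 * M)⁻¹ * X) ^ N, fun s hs => ?_⟩
  have hbase : 0 < 1 + (2 * M)⁻¹ * s := by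
    have hhalf : (2 * M)⁻¹ * -M = -1 / 2 := by field_simp
    have := mul_le_mul_of_nonneg_left (abs_le.1 hs).1 (by positivity : (0 : ℝ) ≤ (2 * M)⁻¹)
    linarith
  simp only [eval_mul, eval_C, eval_pow, eval_add, eval_one, eval_X]
  refine ⟨by positivity, fun hs0 => ?_, fun hηs => ?_⟩
  · have : (2 * M)⁻¹ * s ≤ 0 := mul_nonpos_of_nonneg_of_nonpos (by positivity) hs0
    exact mul_le_of_le_one_right hε.le (pow_le_one₀ hbase.le (by linarith))
  · have hle : 1 + η / (2 * M) ≤ 1 + (2 * M)⁻¹ * s := by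
      rw [div_eq_inv_mul]; gcongr
    calc (1 : ℝ) = ε * ε⁻¹ := (mul_inv_cancel₀ hε.ne').symm
      _ ≤ ε * (1 + η / (2 * M)) ^ N := by gcongr
      _ ≤ ε * (1 + (2 * M)⁻¹ * s) ^ N := by gcongr

theorem IsCompact.exists_pos_forall_exists_le {X : Type*} [TopologicalSpace X] {K : Set X}
    (hK : IsCompact K) {g : ι → X → ℝ} (hg : ∀ i, Continuous (g i))
    (hpos : ∀ t ∈ K, ∃ i, 0 < g i t) : ∃ η, 0 < η ∧ ∀ t ∈ K, ∃ i, η ≤ g i t := by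
  rcases isEmpty_or_nonempty ι with hι | hι
  · exact ⟨1, one_pos, fun t ht => isEmptyElim (hpos t ht).choose⟩
  obtain ⟨η, hη, hηle⟩ := hK.exists_forall_le' (a := 0)
    (Continuous.finset_sup'_apply Finset.univ_nonempty fun i _ => hg i).continuousOn
    fun t ht => by
      obtain ⟨i, hi⟩ := hpos t ht
      exact hi.trans_le (Finset.le_sup' (g · t) (Finset.mem_univ i))
  refine ⟨η, hη, fun t ht => ?_⟩
  obtain ⟨i, -, hi⟩ := Finset.exists_mem_eq_sup' Finset.univ_nonempty (g · t)
  exact ⟨i, hi ▸ hηle t ht⟩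

theorem exists_pos_combination_on_compact {K : Set ℝ} (hK : IsCompact K) (h : ι → ℝ[X])
    (hpos : ∀ t ∈ K, ∃ i, 0 < (h i).eval t) :
    ∃ a : ι → ℝ[X], (∀ i, ∀ t ∈ K, 0 < (a i).eval t) ∧
      ∀ t ∈ K, 0 < (∑ i, a i * h i).eval t := by
  obtain ⟨η, hη, hηle⟩ := hK.exists_pos_forall_exists_le (fun i => (h i).continuous) hpos
  obtain ⟨M₀, hM₀⟩ := hK.exists_bound_of_continuousOn
    (f := fun t i => (h i).eval t) (continuous_pi fun i => (h i).continuous).continuousOn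
  set M := max M₀ 1
  have hM : ∀ t ∈ K, ∀ i, |(h i).eval t| ≤ M := fun t ht i =>
    ((norm_le_pi_norm (fun i => (h i).eval t) i).trans (hM₀ t ht)).trans (le_max_left _ _)
  have hM0 : 0 < M := lt_max_of_lt_right one_pos
  set ε := η / ((Fintype.card ι + 1) * M)
  have hε : 0 < ε := by positivity
  obtain ⟨θ, hθ⟩ := exists_poly_step_approx hM0 hη hε
  refine ⟨fun i => θ.comp (h i), fun i t ht => by simpa using (hθ _ (hM t ht i)).1, fun t ht => ?_⟩
  simp only [eval_finsetSum, eval_mul, eval_comp]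
  have hterm : ∀ j, -(M * ε) ≤ θ.eval ((h j).eval t) * (h j).eval t := fun j => by
    obtain ⟨hθpos, hθsmall, -⟩ := hθ _ (hM t ht j)
    rcases le_or_gt 0 ((h j).eval t) with hj | hj
    · nlinarith [mul_pos hM0 hε]
    · nlinarith [(abs_le.1 (hM t ht j)).1, hθsmall hj.le]
  obtain ⟨i, hi⟩ := hηle t ht
  have hbig : η ≤ θ.eval ((h i).eval t) * (h i).eval t := by
    nlinarith [(hθ _ (hM t ht i)).2.2 hi]
  have hsum := Finset.single_le_sum (f := fun j => θ.eval ((h j).eval t) * (h j).eval t + M * ε)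
    (fun j _ => by linarith [hterm j]) (Finset.mem_univ i)
  rw [Finset.sum_add_distrib, Finset.sum_const, Finset.card_univ, nsmul_eq_mul] at hsum
  have hMε : (Fintype.card ι + 1) * (M * ε) = η := by simp only [ε]; field_simp
  nlinarith

theorem exists_pos_syzygy_on_compact {K : Set ℝ} (hK : IsCompact K) (h : ι → ℝ[X])
    (hmix : ∀ t ∈ K, (∃ i, (h i).eval t < 0) ∧ ∃ i, 0 < (h i).eval t) :
    ∃ m : ι → ℝ[X], (∀ i, ∀ t ∈ K, 0 < (m i).eval t) ∧ ∑ i, m i * h i = 0 := by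
  obtain ⟨a, ha, hA⟩ := exists_pos_combination_on_compact hK h fun t ht => (hmix t ht).2
  obtain ⟨b, hb, hB⟩ := exists_pos_combination_on_compact hK (fun i => -h i) fun t ht => by
    obtain ⟨i, hi⟩ := (hmix t ht).1
    exact ⟨i, by simpa using hi⟩
  refine exists_pos_syzygy_of_pos_combinations ha hb hA fun t ht => ?_
  simpa [Finset.sum_neg_distrib] using hB t ht

theorem exists_abs_eval_le_mul_sq_pow (p : ℝ[X]) :
    ∃ C, 0 ≤ C ∧ ∀ x : ℝ, 1 ≤ |x| → |p.eval x| ≤ C * (x ^ 2) ^ p.natDegree := by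
  refine ⟨∑ i ∈ Finset.range (p.natDegree + 1), |p.coeff i|, by positivity, fun x hx => ?_⟩
  rw [eval_eq_sum_range, Finset.sum_mul, ← sq_abs, ← pow_mul]
  refine (Finset.abs_sum_le_sum_abs _ _).trans (Finset.sum_le_sum fun i hi => ?_)
  rw [abs_mul, abs_pow]
  have := Finset.mem_range_succ_iff.1 hi
  exact mul_le_mul_of_nonneg_left (pow_le_pow_right₀ hx (by omega)) (abs_nonneg _)

theorem eventually_forall_le_abs_eval_ne_zero {p : ℝ[X]} (hp : p ≠ 0) :
    ∀ᶠ T in atTop, ∀ x : ℝ, T ≤ |x| → p.eval x ≠ 0 := by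
  obtain ⟨R, hR⟩ := (finite_setOfPred_isRoot hp).isBounded.exists_norm_le
  filter_upwards [eventually_gt_atTop R] with T hT x hx hroot
  have := hR x hroot
  rw [Real.norm_eq_abs] at this
  linarith

theorem exists_pos_le_abs_eval_on_tails {p : ℝ[X]} {T : ℝ}
    (hp : ∀ x, T ≤ |x| → p.eval x ≠ 0) : ∃ c, 0 < c ∧ ∀ x, T ≤ |x| → c ≤ |p.eval x| := by
  have hfar : ∀ᶠ x in cocompact ℝ ⊓ 𝓟 {x | T ≤ |x|}, |p.eval T| ≤ |p.eval x| := by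
    rcases le_or_gt p.degree 0 with hd | hd
    · rw [eq_C_of_degree_le_zero hd]
      simp
    · simpa only [Real.norm_eq_abs] using
        ((p.tendsto_norm_atTop hd tendsto_norm_cocompact_atTop).eventually_ge_atTop _).filter_mono
          inf_le_left
  obtain ⟨x₀, hx₀, hmin⟩ := p.continuous.abs.continuousOn.exists_isMinOn'
    (isClosed_le continuous_const continuous_abs) (le_abs_self T) hfar
  exact ⟨_, abs_pos.2 (hp x₀ hx₀), fun x hx => hmin hx⟩

theorem IsPreconnected.neg_of_neg_of_ne_zero {X : Type*} [TopologicalSpace X] {S : Set X}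
    (hS : IsPreconnected S) {f : X → ℝ} (hf : ContinuousOn f S) (h0 : ∀ x ∈ S, f x ≠ 0) {x y : X} (hx : x ∈ S) (hy : y ∈ S)
    (hfx : f x < 0) : f y < 0 := by
  by_contra! hfy
  obtain ⟨z, hz, hfz⟩ := hS.intermediate_value hx hy hf ⟨hfx.le, hfy⟩
  exact h0 z hz hfz

theorem eval_neg_of_eval_neg_of_same_side {g : ℝ[X]} {T : ℝ}
    (hg : ∀ x, T ≤ |x| → g.eval x ≠ 0) {x y : ℝ} (hx : T ≤ |x|) (hy : T ≤ |y|)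
    (hxy : 0 < x ↔ 0 < y) (hgx : g.eval x < 0) : g.eval y < 0 := by
  have hS : ∀ S : Set ℝ, IsPreconnected S → (∀ z ∈ S, T ≤ |z|) → x ∈ S → y ∈ S →
      g.eval y < 0 := fun S hS hST hxS hyS =>
    hS.neg_of_neg_of_ne_zero g.continuous.continuousOn (fun z hz => hg z (hST z hz)) hxS hyS hgx
  rcases lt_or_ge 0 x with h0 | h0
  · refine hS (Ici T) isPreconnected_Ici (fun z hz => le_abs.2 (Or.inl hz)) ?_ ?_
    · rwa [abs_of_pos h0] at hx
    · rwa [abs_of_pos (hxy.1 h0)] at hy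
  · have hy0 : y ≤ 0 := not_lt.1 fun h => not_lt.2 h0 (hxy.2 h)
    refine hS (Iic (-T)) isPreconnected_Iic (fun z hz => le_abs.2 (Or.inr (le_neg.1 hz))) ?_ ?_
    · exact le_neg.2 (abs_of_nonpos h0 ▸ hx)
    · exact le_neg.2 (abs_of_nonpos hy0 ▸ hy)

theorem exists_pair_mul_neg {κ : Type*} (u v : κ → ℝ) (huv : ∀ i, u i = 0 ↔ v i = 0)
    (hu : (∃ i, u i < 0) ∧ ∃ i, 0 < u i) (hv : (∃ i, v i < 0) ∧ ∃ i, 0 < v i) :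
    ∃ i k, u i * u k < 0 ∧ v i * v k < 0 := by
  obtain ⟨⟨iu, hiu⟩, ⟨ju, hju⟩⟩ := hu
  obtain ⟨⟨iv, hiv⟩, ⟨jv, hjv⟩⟩ := hv
  by_cases hnn : ∃ k, u k < 0 ∧ v k < 0
  · by_cases hpp : ∃ i, 0 < u i ∧ 0 < v i
    · obtain ⟨i, hui, hvi⟩ := hpp
      obtain ⟨k, huk, hvk⟩ := hnn
      exact ⟨i, k, mul_neg_of_pos_of_neg hui huk, mul_neg_of_pos_of_neg hvi hvk⟩
    · have h1 : v ju < 0 := (lt_or_gt_of_ne (mt (huv ju).2 hju.ne')).resolve_right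
        fun h => hpp ⟨ju, hju, h⟩
      have h2 : u jv < 0 := (lt_or_gt_of_ne (mt (huv jv).1 hjv.ne')).resolve_right
        fun h => hpp ⟨jv, h, hjv⟩
      exact ⟨ju, jv, mul_neg_of_pos_of_neg hju h2, mul_neg_of_neg_of_pos h1 hjv⟩
  · have h1 : 0 < v iu := (lt_or_gt_of_ne (mt (huv iu).2 hiu.ne)).resolve_left
      fun h => hnn ⟨iu, hiu, h⟩
    have h2 : 0 < u iv := (lt_or_gt_of_ne (mt (huv iv).1 hiv.ne)).resolve_left
      fun h => hnn ⟨iv, h, hiv⟩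
    exact ⟨iu, iv, mul_neg_of_neg_of_pos hiu h2, mul_neg_of_pos_of_neg h1 hiv⟩

theorem exists_mem_forall_same_sign {I : Set ℝ} (hI : I.Nonempty) :
    ∃ p ∈ I, ∃ q ∈ I, ∀ x ∈ I, (0 < x ↔ 0 < p) ∨ (0 < x ↔ 0 < q) := by
  obtain ⟨p, hp⟩ := hI
  by_cases h : ∃ q ∈ I, ¬(0 < q ↔ 0 < p)
  · obtain ⟨q, hq, hqp⟩ := h
    exact ⟨p, hp, q, hq, fun x _ => by tauto⟩
  · exact ⟨p, hp, p, hp, fun x hx => Or.inl (not_not.1 fun hx' => h ⟨x, hx, hx'⟩)⟩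

theorem exists_syzygy_ge_of_mul_neg (h : ι → ℝ[X]) {i k : ι} (hik : i ≠ k)
    {I : Set ℝ} (hI : ∀ x ∈ I, 1 ≤ |x|) {c : ℝ} (hc : 0 < c)
    (hik_neg : ∀ x ∈ I, c ≤ -((h i).eval x * (h k).eval x)) (hk : ∀ x ∈ I, c ≤ |(h k).eval x|) :
    ∃ U : ι → ℝ[X], (∀ j, ∀ x ∈ I, c ≤ (U j).eval x) ∧ ∑ j, U j * h j = 0 := by
  classical
  set σ := ∑ j, h j - h i - h k
  set π := -(h i * h k)
  obtain ⟨Cσ, hCσ0, hCσ⟩ := exists_abs_eval_le_mul_sq_pow σ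
  set K := max 1 ((Cσ + 1) / c)
  -- chosen so that the `i`-th entry `M h k² + h k σ` is at least `|h k|` on `I`
  set M : ℝ[X] := C K * (X ^ 2) ^ σ.natDegree
  refine ⟨fun j => if j = i then M * h k ^ 2 + h k * σ else if j = k then M * π else π,
    fun j x hx => ?_, ?_⟩
  · have hx1 := hI x hx
    have hπ : c ≤ π.eval x := by simpa [π] using hik_neg x hx
    have hx2 : 1 ≤ x ^ 2 := (one_le_sq_iff_one_le_abs x).2 hx1
    have hMx : M.eval x = K * (x ^ 2) ^ σ.natDegree := by simp [M]
    have hK : Cσ + 1 ≤ K * c := (div_le_iff₀ hc).1 (le_max_right _ _)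
    have hM1 : 1 ≤ M.eval x := hMx ▸ one_le_mul_of_one_le_of_one_le (le_max_left _ _)
      (one_le_pow₀ hx2)
    have hMσ : |σ.eval x| + 1 ≤ M.eval x * c := by
      have := hCσ x hx1
      have := one_le_pow₀ (n := σ.natDegree) hx2
      rw [hMx]
      nlinarith
    clear_value M
    dsimp only
    split_ifs with hji hjk
    · rw [eval_add, eval_mul, eval_mul, eval_pow]
      have hcross : -(|(h k).eval x| * |σ.eval x|) ≤ (h k).eval x * σ.eval x := by
        rw [← abs_mul]; exact neg_abs_le _
      calc c ≤ |(h k).eval x| := hk x hx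
        _ ≤ |(h k).eval x| * (M.eval x * c - |σ.eval x|) :=
          le_mul_of_one_le_right (abs_nonneg _) (by linarith)
        _ ≤ |(h k).eval x| * (M.eval x * |(h k).eval x| - |σ.eval x|) := by
          gcongr
          exact hk x hx
        _ = M.eval x * (h k).eval x ^ 2 - |(h k).eval x| * |σ.eval x| := by
          rw [← sq_abs]; ring
        _ ≤ _ := by linarith
    · rw [eval_mul]
      nlinarith
    · exact hπ
  · have hterm : ∀ j, (if j = i then M * h k ^ 2 + h k * σ else if j = k then M * π else π) * h j
        = π * h j + (if j = i then (M * h k ^ 2 + h k * σ - π) * h i else 0)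
          + (if j = k then (M * π - π) * h k else 0) := by
      intro j
      split_ifs with hji hjk <;> subst_vars <;> first | exact absurd rfl hik | ring
    rw [Finset.sum_congr rfl fun j _ => hterm j, Finset.sum_add_distrib, Finset.sum_add_distrib,
      Finset.sum_ite_eq', Finset.sum_ite_eq', ← Finset.mul_sum]
    simp only [Finset.mem_univ, if_true, σ, π]
    ring

theorem exists_syzygy_ge_on_tails (h : ι → ℝ[X]) {T : ℝ} (hT : 1 ≤ T)
    (hroots : ∀ i, h i ≠ 0 → ∀ x, T ≤ |x| → (h i).eval x ≠ 0) {I : Set ℝ}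
    (hI : ∀ x ∈ I, T ≤ |x|) (hmix : ∀ x ∈ I, (∃ i, (h i).eval x < 0) ∧ ∃ i, 0 < (h i).eval x) :
    ∃ U : ι → ℝ[X], ∃ c, 0 < c ∧ (∀ j, ∀ x ∈ I, c ≤ (U j).eval x) ∧ ∑ j, U j * h j = 0 := by
  rcases I.eq_empty_or_nonempty with rfl | hne
  · exact ⟨0, 1, one_pos, by simp, by simp⟩
  have hzero : ∀ i, ∀ x, T ≤ |x| → ((h i).eval x = 0 ↔ h i = 0) := fun i x hx =>
    ⟨not_imp_not.1 fun hi => hroots i hi x hx, fun hi => by simp [hi]⟩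
  obtain ⟨p, hp, q, hq, hside⟩ := exists_mem_forall_same_sign hne
  obtain ⟨i, k, hpik, hqik⟩ := exists_pair_mul_neg (fun i => (h i).eval p) (fun i => (h i).eval q)
    (fun i => (hzero i p (hI p hp)).trans (hzero i q (hI q hq)).symm) (hmix p hp) (hmix q hq)
  have hik : i ≠ k := by
    rintro rfl
    exact (mul_self_nonneg _).not_gt hpik
  have hi0 : h i ≠ 0 := fun h0 => by simp [h0] at hpik
  have hk0 : h k ≠ 0 := fun h0 => by simp [h0] at hpik
  have hprod : ∀ x, T ≤ |x| → (h i * h k).eval x ≠ 0 := fun x hx => by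
    rw [eval_mul]
    exact mul_ne_zero (hroots i hi0 x hx) (hroots k hk0 x hx)
  have hneg : ∀ x ∈ I, (h i * h k).eval x < 0 := fun x hx => by
    rcases hside x hx with hs | hs
    · exact eval_neg_of_eval_neg_of_same_side hprod (hI p hp) (hI x hx) hs.symm
        (by simpa using hpik)
    · exact eval_neg_of_eval_neg_of_same_side hprod (hI q hq) (hI x hx) hs.symm
        (by simpa using hqik)
  obtain ⟨c₁, hc₁, hc₁le⟩ := exists_pos_le_abs_eval_on_tails hprod
  obtain ⟨c₂, hc₂, hc₂le⟩ := exists_pos_le_abs_eval_on_tails (hroots k hk0)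
  obtain ⟨U, hU, hsyz⟩ := exists_syzygy_ge_of_mul_neg h hik (fun x hx => hT.trans (hI x hx))
    (lt_min hc₁ hc₂)
    (fun x hx => by
      have := hc₁le x (hI x hx)
      rw [abs_of_neg (hneg x hx), eval_mul] at this
      exact (min_le_left _ _).trans this)
    (fun x hx => (min_le_right _ _).trans (hc₂le x (hI x hx)))
  exact ⟨U, _, lt_min hc₁ hc₂, hU, hsyz⟩

theorem eventually_forall_abs_weight_mul_lt (u : ℝ[X]) {a b δ : ℝ} (ha : 0 < a) (hab : a < b)
    (hδ : 0 < δ) :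
    ∀ᶠ p in atTop, ∀ x, |x| ≤ a → |((a * b)⁻¹ * x ^ 2) ^ p * u.eval x| < δ := by
  have hb : 0 < b := ha.trans hab
  obtain ⟨Cu, hCu⟩ := (isCompact_Icc (a := -a) (b := a)).exists_bound_of_continuousOn
    u.continuous.continuousOn
  have hρ : Tendsto (fun p : ℕ => (a / b) ^ p * Cu) atTop (𝓝 0) := by
    simpa using (tendsto_pow_atTop_nhds_zero_of_lt_one (by positivity)
      ((div_lt_one hb).2 hab)).mul_const Cu
  filter_upwards [hρ.eventually (gt_mem_nhds hδ)] with p hp x hx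
  have hw0 : 0 ≤ (a * b)⁻¹ * x ^ 2 := by positivity
  have hw : (a * b)⁻¹ * x ^ 2 ≤ a / b := by
    have : x ^ 2 ≤ a ^ 2 := sq_le_sq' (abs_le.1 hx).1 (abs_le.1 hx).2
    calc (a * b)⁻¹ * x ^ 2 ≤ (a * b)⁻¹ * a ^ 2 := by gcongr
      _ = a / b := by field_simp
  calc |((a * b)⁻¹ * x ^ 2) ^ p * u.eval x| = ((a * b)⁻¹ * x ^ 2) ^ p * |u.eval x| := by
        rw [abs_mul, abs_of_nonneg (pow_nonneg hw0 _)]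
    _ ≤ (a / b) ^ p * Cu := by
        gcongr
        simpa using hCu x (abs_le.1 hx)
    _ < δ := hp

theorem eventually_forall_abs_eval_lt_weight_mul (m : ℝ[X]) {a b c : ℝ} (ha : 1 ≤ a)
    (hab : a < b) (hc : 0 < c) :
    ∀ᶠ p in atTop, ∀ x, b ≤ |x| → |m.eval x| < ((a * b)⁻¹ * x ^ 2) ^ p * c := by
  have ha0 : 0 < a := by linarith
  have hb : 0 < b := by linarith
  obtain ⟨Cm, -, hCm⟩ := exists_abs_eval_le_mul_sq_pow m
  set d := m.natDegree
  have hR : Tendsto (fun p : ℕ => c * (b / a) ^ (p - d)) atTop atTop :=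
    ((tendsto_pow_atTop_atTop_of_one_lt ((one_lt_div (by linarith)).2 hab)).comp
      (tendsto_sub_atTop_nat d)).const_mul_atTop hc
  filter_upwards [hR.eventually_gt_atTop (Cm * (a * b) ^ d), eventually_ge_atTop d]
    with p hp hpd x hx
  have hx1 : 1 ≤ |x| := by linarith
  set w := (a * b)⁻¹ * x ^ 2
  have hxw : x ^ 2 = a * b * w := by simp only [w]; field_simp
  have hw : b / a ≤ w := by
    have : b ^ 2 ≤ x ^ 2 := by
      rw [← sq_abs x]; gcongr
    calc b / a = (a * b)⁻¹ * b ^ 2 := by field_simp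
      _ ≤ (a * b)⁻¹ * x ^ 2 := by gcongr
  have hwd : 0 < w ^ d := pow_pos ((by positivity : 0 < b / a).trans_le hw) d
  calc |m.eval x| ≤ Cm * (x ^ 2) ^ d := hCm x hx1
    _ = Cm * (a * b) ^ d * w ^ d := by rw [hxw, mul_pow, mul_assoc]
    _ < c * (b / a) ^ (p - d) * w ^ d := by gcongr
    _ ≤ c * w ^ (p - d) * w ^ d := by gcongr
    _ = w ^ p * c := by rw [mul_assoc, ← pow_add, Nat.sub_add_cancel hpd, mul_comm]

theorem eventually_forall_pos_eval_add_weight_mul {S : Set ℝ} {a b c : ℝ} (ha : 1 ≤ a)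
    (hab : a < b) (hc : 0 < c) {m u : ℝ[X]} (hm : ∀ x ∈ closure S, |x| ≤ b → 0 < m.eval x)
    (hu : ∀ x ∈ S, a ≤ |x| → c ≤ u.eval x) :
    ∀ᶠ p in atTop, ∀ x ∈ S, 0 < (m + (C (a * b)⁻¹ * X ^ 2) ^ p * u).eval x := by
  have hab0 : 0 < a * b := by nlinarith
  obtain ⟨δ, hδ, hδle⟩ := (isCompact_Icc.inter_left isClosed_closure).exists_forall_le' (a := 0)
    m.continuous.continuousOn fun x hx => hm x hx.1 (abs_le.2 hx.2)
  filter_upwards [eventually_forall_abs_weight_mul_lt u (by linarith) hab hδ,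
    eventually_forall_abs_eval_lt_weight_mul m ha hab hc] with p hnear hfar x hx
  simp only [eval_add, eval_mul, eval_pow, eval_C, eval_X]
  have hw0 : 0 ≤ ((a * b)⁻¹ * x ^ 2) ^ p := by positivity
  have hmδ : |x| ≤ b → δ ≤ m.eval x := fun hxb => hδle x ⟨subset_closure hx, abs_le.1 hxb⟩
  rcases le_or_gt |x| a with hxa | hxa
  · linarith [neg_abs_le (((a * b)⁻¹ * x ^ 2) ^ p * u.eval x), hnear x hxa,
      hmδ (hxa.trans hab.le)]
  have hux := hu x hx hxa.le
  rcases le_or_gt |x| b with hxb | hxb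
  · have := mul_nonneg hw0 (hc.le.trans hux)
    linarith [hmδ hxb]
  · linarith [neg_abs_le (m.eval x), hfar x hxb.le, mul_le_mul_of_nonneg_left hux hw0]

theorem exists_pos_syzygy_of_sign_change_on_closure (h : ι → ℝ[X]) (B : Set ℝ)
    (hmix : ∀ t ∈ closure B, (∃ i, (h i).eval t < 0) ∧ ∃ i, 0 < (h i).eval t) :
    ∃ f : ι → ℝ[X], (∀ i, ∀ x ∈ B, 0 < (f i).eval x) ∧ ∑ i, f i * h i = 0 := by
  obtain ⟨T, hT, hroots⟩ : ∃ T, 1 ≤ T ∧ ∀ i, h i ≠ 0 → ∀ x, T ≤ |x| → (h i).eval x ≠ 0 :=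
    ((eventually_ge_atTop 1).and (eventually_all.2 fun i => eventually_imp_distrib_left.2
      fun hi => eventually_forall_le_abs_eval_ne_zero hi)).exists
  obtain ⟨U, c, hc, hU, hUsyz⟩ := exists_syzygy_ge_on_tails h hT hroots
    (I := {x ∈ B | T ≤ |x|}) (fun x hx => hx.2) fun x hx => hmix x (subset_closure hx.1)
  obtain ⟨m, hm, hmsyz⟩ := exists_pos_syzygy_on_compact
    (isCompact_Icc.inter_left isClosed_closure) h fun t ht => hmix t ht.1
  obtain ⟨p, hp⟩ := (eventually_all.2 fun j => eventually_forall_pos_eval_add_weight_mul hT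
    (lt_add_one T) hc (fun x hx hxb => hm j x ⟨hx, abs_le.1 hxb⟩)
    fun x hx hxT => hU j x ⟨hx, hxT⟩).exists
  refine ⟨fun j => m j + (C (T * (T + 1))⁻¹ * X ^ 2) ^ p * U j, hp, ?_⟩
  simp only [add_mul, Finset.sum_add_distrib, mul_assoc, ← Finset.mul_sum, hmsyz, hUsyz,
    mul_zero, add_zero]

theorem stmt1_general (n : ℕ) (h : Fin n → Polynomial ℝ) (B : Set ℝ)
    (hnosol : ¬ ∃ f : Fin n → Polynomial ℝ,
      (∀ i, ∀ x ∈ B, 0 < (f i).eval x) ∧ ∑ i, f i * h i = 0) :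
    ∃ t ∈ closure B,
      (∀ i, 0 ≤ (h i).eval t) ∨ (∀ i, (h i).eval t ≤ 0) := by
  by_contra! hmix
  exact hnosol (exists_pos_syzygy_of_sign_change_on_closure h B hmix)

theorem stmt1 (n : ℕ) (h : Fin n → Polynomial ℝ)
    (hgcd : Finset.univ.gcd h = 1) (B : Set ℝ)
    (hnosol : ¬ ∃ f : Fin n → Polynomial ℝ,
      (∀ i, ∀ x ∈ B, 0 < (f i).eval x) ∧ ∑ i, f i * h i = 0) :
    ∃ t ∈ closure B,
      (∀ i, 0 ≤ (h i).eval t) ∨ (∀ i, (h i).eval t ≤ 0) :=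
  stmt1_general n h B hnosol
end

section
/- Let h₁, ..., hₙ ∈ ℤ[X] with gcd(h₁,...,hₙ) = 1. If the equation f₁h₁ + ⋯ + fₙhₙ = 0 has no solution with all fᵢ nonzero polynomials with non-negative integer coefficients, then there exists t ∈ ℝ with t ≥ 0 such that h₁(t), ..., hₙ(t) are all non-negative or all non-positive. -/
/-!
If no `t ≥ 0` makes all `hᵢ(t)` of one sign, then at every `t ≥ 0` some `hᵢ` is positive and
some is negative. Sweeping `[0, ∞)` from left to right, combinations `d • Q + (1 + X) ^ N * H`
with `d, N` large glue local positivity, so the `ℕ[X]`-span of the `hᵢ` contains a `Q` positive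
on `[0, ∞)`, and that of the `-hᵢ` contains such a `P`. By Pólya's theorem we may take `Q` and `P`
in `ℕ[X]` with positive constant terms. Pick `A ∈ ℕ[X]` with `W = A * P - ∑ hᵢ ∈ ℕ[X]` and write
`Q = ∑ qᵢ hᵢ`, `-P = ∑ pᵢ hᵢ`; then `fⱼ = Q + W qⱼ + Q A pⱼ` are nonzero, lie in `ℕ[X]`, and
`∑ fⱼ hⱼ = Q ∑ hᵢ + W Q - Q A P = 0`.
-/

open Polynomial Finset Filter Topology

section OrderedField

variable {K : Type*} [Field K] [LinearOrder K] [IsStrictOrderedRing K]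

theorem pow_sub_pow_le_mul_sub {a b : K} (ha : 0 ≤ a) (hab : a ≤ b) (hb : b ≤ 1) (j : ℕ) :
    b ^ j - a ^ j ≤ j * (b - a) := by
  have hmax : max |b| |a| ^ (j - 1) ≤ 1 :=
    pow_le_one₀ (by positivity) (max_le (by rwa [abs_of_nonneg (ha.trans hab)])
      (by rw [abs_of_nonneg ha]; linarith))
  calc b ^ j - a ^ j ≤ |b ^ j - a ^ j| := le_abs_self _
    _ ≤ |b - a| * j * max |b| |a| ^ (j - 1) := abs_pow_sub_pow_le _ _ _
    _ ≤ |b - a| * j := mul_le_of_le_one_right (by positivity) hmax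
    _ = j * (b - a) := by rw [abs_of_nonneg (sub_nonneg.2 hab), mul_comm]

theorem prod_div_mem_Icc {M k j d : ℕ} (hk : k ≤ M) (hj : j ≤ d) (hM : 0 < M) :
    ∏ i ∈ range j, ((k : K) - i) / ((M : K) - i) ∈
      Set.Icc (max 0 (((k : K) - d) / M) ^ j) (((k : K) / M) ^ j) := by
  have hM' : (0 : K) < M := by exact_mod_cast hM
  have hkM : (k : K) ≤ M := by exact_mod_cast hk
  by_cases hjk : j ≤ k
  · have hfac : ∀ i ∈ range j, 0 ≤ ((k : K) - i) / ((M : K) - i) ∧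
        max 0 (((k : K) - d) / M) ≤ ((k : K) - i) / ((M : K) - i) ∧
        ((k : K) - i) / ((M : K) - i) ≤ (k : K) / M := by
      intro i hi
      have hij : (i : K) + 1 ≤ j := by exact_mod_cast mem_range.1 hi
      have hjk' : (j : K) ≤ k := by exact_mod_cast hjk
      have hjd : (j : K) ≤ d := by exact_mod_cast hj
      have hi0 : (0 : K) ≤ i := i.cast_nonneg
      have hMi : (0 : K) < M - i := by linarith
      have hnn : 0 ≤ ((k : K) - i) / ((M : K) - i) := div_nonneg (by linarith) hMi.le
      refine ⟨hnn, max_le hnn ?_, ?_⟩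
      · rw [div_le_div_iff₀ hM' hMi]; nlinarith
      · rw [div_le_div_iff₀ hMi hM']; nlinarith
    constructor
    · simpa using prod_le_prod (fun _ _ => le_max_left _ _) fun i hi => (hfac i hi).2.1
    · simpa [div_pow] using prod_le_prod (fun i hi => (hfac i hi).1) fun i hi => (hfac i hi).2.2
  · have hkd : (k : K) < d := by exact_mod_cast (show k < d by omega)
    rw [prod_eq_zero (mem_range.2 (not_le.1 hjk)) (by simp),
      max_eq_left (div_nonpos_of_nonpos_of_nonneg (by linarith) hM'.le),
      zero_pow (by omega)]
    exact ⟨le_rfl, by positivity⟩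

theorem abs_prod_div_sub_pow_le {M k j d : ℕ} (hk : k ≤ M) (hj : j ≤ d) (hM : 0 < M) :
    |∏ i ∈ range j, ((k : K) - i) / ((M : K) - i) - ((k : K) / M) ^ j| ≤ (d : K) ^ 2 / M := by
  have hM' : (0 : K) < M := by exact_mod_cast hM
  set a := max 0 (((k : K) - d) / M)
  obtain ⟨hlo, hhi⟩ := prod_div_mem_Icc (K := K) hk hj hM
  have hak : a ≤ k / M := max_le (by positivity) (by gcongr; linarith [d.cast_nonneg (α := K)])
  have hk1 : (k : K) / M ≤ 1 := (div_le_one hM').2 (by exact_mod_cast hk)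
  have hgap : (k : K) / M - a ≤ d / M := by
    have : ((k : K) - d) / M ≤ a := le_max_right _ _
    rw [sub_div] at this; linarith
  rw [abs_sub_comm, abs_of_nonneg (sub_nonneg.2 hhi)]
  calc ((k : K) / M) ^ j - _ ≤ ((k : K) / M) ^ j - a ^ j := by linarith
    _ ≤ j * ((k : K) / M - a) := pow_sub_pow_le_mul_sub (le_max_left _ _) hak hk1 j
    _ ≤ d * (d / M) := by gcongr
    _ = (d : K) ^ 2 / M := by ring

end OrderedField

theorem Nat.choose_mul_descFactorial (M k j : ℕ) :
    M.choose k * k.descFactorial j =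
      M.descFactorial j * if j ≤ k then (M - j).choose (k - j) else 0 := by
  split_ifs with hjk
  · rw [Nat.descFactorial_eq_factorial_mul_choose, Nat.descFactorial_eq_factorial_mul_choose,
      mul_left_comm, Nat.choose_mul hjk, mul_assoc]
  · rw [Nat.descFactorial_eq_zero_iff_lt.2 (by omega), mul_zero, mul_zero]

theorem cast_choose_sub_eq_mul_prod {K : Type*} [Field K] [CharZero K] {M j : ℕ} (k : ℕ)
    (hj : j ≤ M) :
    ((if j ≤ k then (M - j).choose (k - j) else 0 : ℕ) : K) =
      M.choose k * ∏ i ∈ range j, ((k : K) - i) / ((M : K) - i) := by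
  have hprod (m : ℕ) : (m.descFactorial j : K) = ∏ i ∈ range j, ((m : K) - i) := by
    rw [← descPochhammer_eval_eq_descFactorial, descPochhammer_eval_eq_prod_range]
  have hM : (M.descFactorial j : K) ≠ 0 :=
    Nat.cast_ne_zero.2 fun h => by have := Nat.descFactorial_eq_zero_iff_lt.1 h; omega
  rw [prod_div_distrib, ← hprod, ← hprod, mul_div_assoc', eq_div_iff hM, mul_comm]
  exact_mod_cast (Nat.choose_mul_descFactorial M k j).symm

/-- Core estimate of Pólya's theorem: the product is `C(M - j, k - j) / C(M, k)`, which is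
uniformly close to `(k / M) ^ j`. -/
theorem eventually_sum_mul_prod_div_nonneg (γ : ℕ → ℝ) (d : ℕ) {δ : ℝ} (hδ : 0 < δ)
    (hγ : ∀ y ∈ Set.Icc (0 : ℝ) 1, δ ≤ ∑ j ∈ range (d + 1), γ j * y ^ j) :
    ∀ᶠ M : ℕ in atTop, ∀ k ≤ M,
      0 ≤ ∑ j ∈ range (d + 1), γ j * ∏ i ∈ range j, ((k : ℝ) - i) / ((M : ℝ) - i) := by
  set Γ := ∑ j ∈ range (d + 1), |γ j|
  have hsmall : ∀ᶠ M : ℕ in atTop, Γ * (d : ℝ) ^ 2 / M < δ :=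
    (tendsto_const_div_atTop_nhds_zero_nat _).eventually (gt_mem_nhds hδ)
  filter_upwards [hsmall, eventually_gt_atTop 0] with M hM hM0 k hk
  have hy : (k : ℝ) / M ∈ Set.Icc (0 : ℝ) 1 :=
    ⟨by positivity, (div_le_one (by exact_mod_cast hM0)).2 (by exact_mod_cast hk)⟩
  have hclose : |∑ j ∈ range (d + 1), γ j * ∏ i ∈ range j, ((k : ℝ) - i) / ((M : ℝ) - i) -
      ∑ j ∈ range (d + 1), γ j * ((k : ℝ) / M) ^ j| ≤ Γ * (d : ℝ) ^ 2 / M := by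
    rw [← sum_sub_distrib, mul_div_assoc, sum_mul]
    refine (abs_sum_le_sum_abs _ _).trans (sum_le_sum fun j hj => ?_)
    rw [← mul_sub, abs_mul]
    exact mul_le_mul_of_nonneg_left
      (abs_prod_div_sub_pow_le hk (Nat.lt_succ_iff.1 (mem_range.1 hj)) hM0) (abs_nonneg _)
  linarith [(abs_le.1 hclose).1, hγ _ hy]

namespace Polynomial

theorem eventually_abs_eval_sub_le (p : ℝ[X]) :
    ∀ᶠ t in atTop, |p.eval t - p.leadingCoeff * t ^ p.natDegree| ≤
      |p.leadingCoeff * t ^ p.natDegree| / 2 := by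
  filter_upwards [(isEquivalent_atTop_lead p).isLittleO.bound (by norm_num : (0 : ℝ) < 1 / 2)]
    with t ht
  simpa [Real.norm_eq_abs, div_eq_inv_mul] using ht

theorem exists_pos_eventually_le_eval {p : ℝ[X]} (hp : 0 < p.leadingCoeff) :
    ∃ δ > 0, ∀ᶠ t in atTop, δ ≤ p.eval t := by
  refine ⟨p.leadingCoeff / 2, half_pos hp, ?_⟩
  filter_upwards [eventually_abs_eval_sub_le p, eventually_ge_atTop 1] with t ht ht1
  have : p.leadingCoeff ≤ p.leadingCoeff * t ^ p.natDegree :=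
    le_mul_of_one_le_right hp.le (one_le_pow₀ ht1)
  have ht0 : 0 < t := by linarith
  rw [abs_of_pos (show 0 < p.leadingCoeff * t ^ p.natDegree by positivity)] at ht
  linarith [abs_le.1 ht]

theorem eventually_eval_nonpos {p : ℝ[X]} (hp : p.leadingCoeff ≤ 0) :
    ∀ᶠ t in atTop, p.eval t ≤ 0 := by
  filter_upwards [eventually_abs_eval_sub_le p, eventually_ge_atTop 0] with t ht ht0
  rw [abs_of_nonpos (mul_nonpos_of_nonpos_of_nonneg hp (by positivity))] at ht
  linarith [abs_le.1 ht]

theorem leadingCoeff_pos_of_forall_pos {p : ℝ[X]} (hp : ∀ t, 0 ≤ t → 0 < p.eval t) :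
    0 < p.leadingCoeff := by
  by_contra! h
  obtain ⟨t, ht, ht0⟩ := ((eventually_eval_nonpos h).and (eventually_ge_atTop 0)).exists
  exact (hp t ht0).not_ge ht

/-- `(1 - y) ^ d * p (y / (1 - y))` as a polynomial in `y`; the substitution `x = y / (1 - y)`
maps `[0, 1)` onto `[0, ∞)`. -/
noncomputable def intervalTransform (p : ℝ[X]) (d : ℕ) : ℝ[X] :=
  ∑ j ∈ range (d + 1), C (p.coeff j) * X ^ j * (1 - X) ^ (d - j)

theorem natDegree_intervalTransform_le (p : ℝ[X]) (d : ℕ) :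
    (intervalTransform p d).natDegree ≤ d := by
  refine natDegree_sum_le_of_forall_le _ _ fun j hj => ?_
  have h1 : (1 - X : ℝ[X]).natDegree ≤ 1 := by compute_degree
  refine (natDegree_mul_le_of_le (natDegree_C_mul_X_pow_le _ _)
    (natDegree_pow_le_of_le _ h1)).trans ?_
  have := mem_range.1 hj
  omega

theorem eval_intervalTransform (p : ℝ[X]) (d : ℕ) (y : ℝ) :
    (intervalTransform p d).eval y =
      ∑ j ∈ range (d + 1), p.coeff j * y ^ j * (1 - y) ^ (d - j) := by
  simp [intervalTransform, eval_finsetSum]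

theorem one_add_pow_mul_eval_intervalTransform {p : ℝ[X]} {d : ℕ} (hp : p.natDegree ≤ d) {x : ℝ}
    (hx : 1 + x ≠ 0) : (1 + x) ^ d * (intervalTransform p d).eval (x / (1 + x)) = p.eval x := by
  have hy : 1 - x / (1 + x) = (1 + x)⁻¹ := by field_simp; ring
  rw [eval_intervalTransform, eval_eq_sum_range' (Nat.lt_succ_of_le hp), mul_sum]
  refine sum_congr rfl fun j hj => ?_
  rw [hy, ← Nat.sub_add_cancel (Nat.lt_succ_iff.1 (mem_range.1 hj)), pow_add, Nat.add_sub_cancel,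
    div_pow, inv_pow]
  field_simp

theorem eq_sum_intervalTransform {p : ℝ[X]} {d : ℕ} (hp : p.natDegree ≤ d) :
    p = ∑ j ∈ range (d + 1),
      C ((intervalTransform p d).coeff j) * X ^ j * (1 + X) ^ (d - j) := by
  refine eq_of_infinite_eval_eq _ _ (Set.Ioi_infinite 0 |>.mono fun x (hx : 0 < x) => ?_)
  have hx1 : (1 + x) ≠ 0 := by positivity
  rw [Set.mem_ofPred_eq, ← one_add_pow_mul_eval_intervalTransform hp hx1,
    eval_eq_sum_range' (Nat.lt_succ_of_le (natDegree_intervalTransform_le p d)), mul_sum,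
    eval_finsetSum]
  refine sum_congr rfl fun j hj => ?_
  simp only [eval_mul, eval_C, eval_pow, eval_X, eval_add, eval_one]
  have hsplit : (1 + x) ^ d = (1 + x) ^ (d - j) * (1 + x) ^ j := by
    rw [← pow_add, Nat.sub_add_cancel (Nat.lt_succ_iff.1 (mem_range.1 hj))]
  rw [hsplit, div_pow]
  field_simp

theorem intervalTransform_pos {p : ℝ[X]} (hp : ∀ t, 0 ≤ t → 0 < p.eval t) :
    ∀ y ∈ Set.Icc (0 : ℝ) 1, 0 < (intervalTransform p p.natDegree).eval y := by
  rintro y ⟨hy0, hy1⟩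
  rcases hy1.lt_or_eq with hy1 | rfl
  · have hx : 0 ≤ y / (1 - y) := div_nonneg hy0 (by linarith)
    have hx1 : 1 + y / (1 - y) ≠ 0 := by positivity
    have hxy : y / (1 - y) / (1 + y / (1 - y)) = y := by field_simp; ring
    have := one_add_pow_mul_eval_intervalTransform le_rfl hx1 (p := p)
    rw [hxy] at this
    exact pos_of_mul_pos_right (this ▸ hp _ hx) (by positivity)
  · rw [eval_intervalTransform, sum_range_succ, sum_eq_zero fun j hj => by
      rw [sub_self, zero_pow (by have := mem_range.1 hj; omega), mul_zero]]
    simpa using leadingCoeff_pos_of_forall_pos hp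

theorem one_add_X_pow_sub_mul_eq_sum {p : ℝ[X]} {d M : ℕ} (hp : p.natDegree ≤ d) (hdM : d ≤ M) :
    (1 + X) ^ (M - d) * p =
      ∑ j ∈ range (d + 1), C ((intervalTransform p d).coeff j) * (X ^ j * (1 + X) ^ (M - j)) := by
  conv_lhs => rw [eq_sum_intervalTransform hp, mul_sum]
  refine sum_congr rfl fun j hj => ?_
  have hjd := Nat.lt_succ_iff.1 (mem_range.1 hj)
  rw [show M - j = (M - d) + (d - j) by omega, pow_add]
  ring

theorem exists_coeff_one_add_X_pow_mul_nonneg {p : ℝ[X]} (hp : ∀ t, 0 ≤ t → 0 < p.eval t) :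
    ∃ N, ∀ k, 0 ≤ ((1 + X) ^ N * p).coeff k := by
  set d := p.natDegree
  set G := intervalTransform p d
  obtain ⟨δ, hδ, hG⟩ := isCompact_Icc.exists_forall_le' G.continuous.continuousOn
    (intervalTransform_pos hp)
  have hγ : ∀ y ∈ Set.Icc (0 : ℝ) 1, δ ≤ ∑ j ∈ range (d + 1), G.coeff j * y ^ j := fun y hy =>
    eval_eq_sum_range' (Nat.lt_succ_of_le (natDegree_intervalTransform_le p d)) y ▸ hG y hy
  obtain ⟨M, hM, hdM⟩ :=
    ((eventually_sum_mul_prod_div_nonneg _ d hδ hγ).and (eventually_ge_atTop d)).exists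
  refine ⟨M - d, fun k => ?_⟩
  have hcoeff : ∀ j ∈ range (d + 1), (C (G.coeff j) * (X ^ j * (1 + X) ^ (M - j))).coeff k =
      G.coeff j * ((if j ≤ k then (M - j).choose (k - j) else 0 : ℕ) : ℝ) := fun j _ => by
    rw [coeff_C_mul, coeff_X_pow_mul', coeff_one_add_X_pow]
    split_ifs <;> simp
  rw [one_add_X_pow_sub_mul_eq_sum le_rfl hdM, finsetSum_coeff, sum_congr rfl hcoeff]
  rcases le_or_gt k M with hk | hk
  · rw [sum_congr rfl fun j hj => by
      rw [cast_choose_sub_eq_mul_prod k ((Nat.lt_succ_iff.1 (mem_range.1 hj)).trans hdM),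
        mul_left_comm], ← mul_sum]
    exact mul_nonneg (Nat.cast_nonneg _) (hM k hk)
  · refine sum_nonneg fun j hj => ?_
    have hjd := Nat.lt_succ_iff.1 (mem_range.1 hj)
    rw [if_pos (by omega), Nat.choose_eq_zero_of_lt (by omega : M - j < k - j)]
    simp

end Polynomial

theorem exists_nat_between_one_add_pow {b₁ b₂ : ℝ} (hb₁ : 0 ≤ b₁) (hb : b₁ < b₂) {A B : ℝ}
    (hA : 0 ≤ A) (hB : 0 ≤ B) (D : ℕ) :
    ∃ d N : ℕ, D ≤ N ∧ (1 + b₁) ^ N * A < d ∧ d * B < (1 + b₂) ^ (N - D) := by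
  set r := (1 + b₁) / (1 + b₂)
  have hr0 : 0 ≤ r := div_nonneg (by linarith) (by linarith)
  have hr : r < 1 := (div_lt_one (by linarith)).2 (by linarith)
  have hsmall : ∀ᶠ N : ℕ in atTop, r ^ N * ((A + 2) * B * (1 + b₂) ^ D) < 1 := by
    refine ((tendsto_pow_atTop_nhds_zero_of_lt_one hr0 hr).mul_const
      ((A + 2) * B * (1 + b₂) ^ D)).eventually (gt_mem_nhds ?_)
    simp
  obtain ⟨N, hN, hDN⟩ := (hsmall.and (eventually_ge_atTop D)).exists
  set x := (1 + b₁) ^ N * A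
  have hx : 0 ≤ x := by positivity
  refine ⟨⌈x⌉₊ + 1, N, hDN, by push_cast; linarith [Nat.le_ceil x], ?_⟩
  have hd : ((⌈x⌉₊ + 1 : ℕ) : ℝ) ≤ (1 + b₁) ^ N * (A + 2) := by
    have : (1 : ℝ) ≤ (1 + b₁) ^ N := one_le_pow₀ (by linarith)
    push_cast; nlinarith [Nat.ceil_lt_add_one hx]
  have hpow : (1 + b₁) ^ N = r ^ N * (1 + b₂) ^ (N - D) * (1 + b₂) ^ D := by
    rw [mul_assoc, ← pow_add, Nat.sub_add_cancel hDN, ← mul_pow, div_mul_cancel₀ _ (by linarith)]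
  calc ((⌈x⌉₊ + 1 : ℕ) : ℝ) * B ≤ (1 + b₁) ^ N * (A + 2) * B := by gcongr
    _ = r ^ N * ((A + 2) * B * (1 + b₂) ^ D) * (1 + b₂) ^ (N - D) := by rw [hpow]; ring
    _ < 1 * (1 + b₂) ^ (N - D) := by gcongr; exact pow_pos (by linarith) _
    _ = (1 + b₂) ^ (N - D) := one_mul _

namespace Polynomial

theorem exists_abs_eval_le_mul_one_add_pow (p : ℝ[X]) :
    ∃ B, ∀ t, 0 ≤ t → |p.eval t| ≤ B * (1 + t) ^ p.natDegree := by
  refine ⟨∑ i ∈ range (p.natDegree + 1), |p.coeff i|, fun t ht => ?_⟩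
  rw [eval_eq_sum_range, sum_mul]
  refine (abs_sum_le_sum_abs _ _).trans (sum_le_sum fun i hi => ?_)
  rw [abs_mul, abs_of_nonneg (pow_nonneg ht i)]
  gcongr
  calc t ^ i ≤ (1 + t) ^ i := by gcongr; linarith
    _ ≤ (1 + t) ^ p.natDegree :=
      pow_le_pow_right₀ (by linarith) (Nat.lt_succ_iff.1 (mem_range.1 hi))

/-- The weight `(1 + t) ^ N` stays below `(1 + b₁) ^ N` on `[0, b₁]`, where `d * q` dominates,
and beyond `b₂` outgrows `q` by the factor `((1 + b₂) / (1 + b₁)) ^ N`, so `η ≥ δ` dominates. -/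
theorem exists_nat_mul_add_one_add_pow_mul_pos {q η : ℝ[X]} {b₁ b₂ δ : ℝ}
    (hb₁ : 0 ≤ b₁) (hb : b₁ < b₂) (hδ : 0 < δ) (hq : ∀ t ∈ Set.Icc 0 b₂, 0 < q.eval t)
    (hη : ∀ t ∈ Set.Icc b₁ b₂, 0 < η.eval t) :
    ∃ d N : ℕ, ∀ t, 0 ≤ t → (t ≤ b₂ ∨ δ ≤ η.eval t) →
      0 < d * q.eval t + (1 + t) ^ N * η.eval t := by
  obtain ⟨δ₁, hδ₁, hq₁⟩ := isCompact_Icc.exists_forall_le' (s := Set.Icc 0 b₁)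
    q.continuous.continuousOn fun t ht => hq t ⟨ht.1, ht.2.trans hb.le⟩
  obtain ⟨B, hB⟩ := isCompact_Icc.exists_bound_of_continuousOn (s := Set.Icc 0 b₁)
    η.continuous.continuousOn
  have hB0 : 0 ≤ B := (norm_nonneg _).trans (hB 0 ⟨le_rfl, hb₁⟩)
  obtain ⟨C, hC⟩ := q.exists_abs_eval_le_mul_one_add_pow
  have hC0 : 0 ≤ C := by simpa using (abs_nonneg _).trans (hC 0 le_rfl)
  set D := q.natDegree
  obtain ⟨d, N, hDN, hleft, hright⟩ :=
    exists_nat_between_one_add_pow hb₁ hb (div_nonneg hB0 hδ₁.le) (div_nonneg hC0 hδ.le) D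
  rw [mul_div_assoc', div_lt_iff₀ hδ₁] at hleft
  rw [mul_div_assoc', div_lt_iff₀ hδ] at hright
  refine ⟨d, N, fun t ht0 ht => ?_⟩
  have hwt : 0 < (1 + t) ^ N := by positivity
  rcases le_or_gt t b₁ with h1 | h1
  · have hηt : |η.eval t| ≤ B := by simpa using hB t ⟨ht0, h1⟩
    have hweight : (1 + t) ^ N * |η.eval t| ≤ (1 + b₁) ^ N * B := by gcongr
    have hqt : d * δ₁ ≤ d * q.eval t := by gcongr; exact hq₁ t ⟨ht0, h1⟩
    nlinarith [neg_abs_le (η.eval t)]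
  rcases le_or_gt t b₂ with h2 | h2
  · exact add_pos_of_nonneg_of_pos (mul_nonneg d.cast_nonneg (hq t ⟨ht0, h2⟩).le)
      (mul_pos hwt (hη t ⟨h1.le, h2⟩))
  · have hηt : δ ≤ η.eval t := ht.resolve_left h2.not_ge
    have hqt : -(d * (C * (1 + t) ^ D)) ≤ d * q.eval t := by
      rw [← mul_neg]; gcongr; exact neg_le_of_abs_le (hC t ht0)
    have hηt' : (1 + t) ^ D * ((1 + b₂) ^ (N - D) * δ) ≤ (1 + t) ^ N * η.eval t := by
      rw [← Nat.add_sub_of_le hDN, pow_add, Nat.add_sub_cancel_left, mul_assoc]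
      gcongr
      linarith
    have hdom : d * C * (1 + t) ^ D < (1 + t) ^ D * ((1 + b₂) ^ (N - D) * δ) := by
      rw [mul_comm _ ((1 + t) ^ D)]
      exact mul_lt_mul_of_pos_left (by linarith) (by positivity)
    linarith

end Polynomial

/-- `ℕ[X]`, as the subsemiring of `ℤ[X]` of polynomials with nonnegative coefficients. -/
noncomputable def natPoly : Subsemiring ℤ[X] := lifts (Nat.castRingHom ℤ)

namespace natPoly

theorem mem_iff {p : ℤ[X]} : p ∈ natPoly ↔ ∀ k, 0 ≤ p.coeff k := by
  simp only [natPoly, lifts_iff_coeff_lifts, Set.mem_range, eq_natCast]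
  exact forall_congr' fun k =>
    ⟨fun ⟨m, hm⟩ => hm ▸ Int.natCast_nonneg m, fun h => ⟨_, Int.toNat_of_nonneg h⟩⟩

theorem monomial_mem {c : ℤ} (hc : 0 ≤ c) (k : ℕ) : monomial k c ∈ natPoly :=
  monomial_mem_lifts k ⟨c.toNat, by simp [hc]⟩

theorem one_add_X_pow_mem (N : ℕ) : (1 + X) ^ N ∈ natPoly :=
  pow_mem (add_mem (one_mem _) (X_mem_lifts _)) N

theorem sub_one_mem {P : ℤ[X]} (hP : P ∈ natPoly) (hP0 : 0 < P.coeff 0) : P - 1 ∈ natPoly := by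
  refine mem_iff.2 fun k => ?_
  rw [coeff_sub, coeff_one]
  split_ifs with hk
  · subst hk; linarith
  · simpa using mem_iff.1 hP k

theorem add_ne_zero_left {p q : ℤ[X]} (hp : p ∈ natPoly) (hq : q ∈ natPoly) (hp0 : p ≠ 0) :
    p + q ≠ 0 := by
  refine fun h => hp0 (ext fun k => ?_)
  have := congrArg (coeff · k) h
  simp only [coeff_add, coeff_zero] at this ⊢
  linarith [mem_iff.1 hp k, mem_iff.1 hq k]

theorem exists_mul_sub_mem {P : ℤ[X]} (hP : P - 1 ∈ natPoly) (g : ℤ[X]) :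
    ∃ A ∈ natPoly, A * P - g ∈ natPoly := by
  induction g using Polynomial.induction_on' with
  | add p q hp hq =>
    obtain ⟨A, hA, hAp⟩ := hp
    obtain ⟨B, hB, hBq⟩ := hq
    exact ⟨A + B, add_mem hA hB, by convert add_mem hAp hBq using 1; ring⟩
  | monomial k c =>
    rcases le_or_gt 0 c with hc | hc
    · refine ⟨monomial k c, monomial_mem hc k, ?_⟩
      rw [← mul_sub_one]
      exact mul_mem (monomial_mem hc k) hP
    · refine ⟨0, zero_mem _, ?_⟩
      rw [zero_mul, zero_sub, ← map_neg]
      exact monomial_mem (by linarith) k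

theorem mul_mem_of_mem {S : Submodule natPoly ℤ[X]} {a Q : ℤ[X]} (ha : a ∈ natPoly)
    (hQ : Q ∈ S) : a * Q ∈ S :=
  S.smul_mem ⟨a, ha⟩ hQ

end natPoly

open natPoly

section Cone

variable (S : Submodule natPoly ℤ[X])

theorem exists_mem_pos_glue {Q H : ℤ[X]} (hQ : Q ∈ S) (hH : H ∈ S) {b₁ b₂ δ : ℝ}
    (hb₁ : 0 ≤ b₁) (hb : b₁ < b₂) (hδ : 0 < δ) (hQpos : ∀ t ∈ Set.Icc 0 b₂, 0 < aeval t Q)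
    (hHpos : ∀ t ∈ Set.Icc b₁ b₂, 0 < aeval t H) :
    ∃ R ∈ S, ∀ t : ℝ, 0 ≤ t → (t ≤ b₂ ∨ δ ≤ aeval t H) → 0 < aeval t R := by
  simp only [← eval_map_algebraMap] at hQpos hHpos ⊢
  obtain ⟨d, N, hpos⟩ := exists_nat_mul_add_one_add_pow_mul_pos hb₁ hb hδ hQpos hHpos
  refine ⟨C (d : ℤ) * Q + (1 + X) ^ N * H,
    add_mem (mul_mem_of_mem (by simp) hQ)
      (mul_mem_of_mem (one_add_X_pow_mem N) hH), fun t ht0 ht => ?_⟩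
  convert hpos t ht0 ht using 1
  simp

theorem exists_mem_pos_on_Icc_add {Q H : ℤ[X]} (hQ : Q ∈ S) (hH : H ∈ S) {x s : ℝ} (hs : 0 < s)
    (hsx : s ≤ x) (hQpos : ∀ t ∈ Set.Icc 0 x, 0 < aeval t Q)
    (hHpos : ∀ t ∈ Set.Icc (x - s) (x + s), 0 < aeval t H) :
    ∃ R ∈ S, ∀ t ∈ Set.Icc 0 (x + s), 0 < aeval t R := by
  obtain ⟨δ, hδ, hHδ⟩ := isCompact_Icc.exists_forall_le' (s := Set.Icc x (x + s))
    (Polynomial.continuous_aeval H).continuousOn fun t ht => hHpos t ⟨by linarith [ht.1], ht.2⟩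
  obtain ⟨R, hRS, hR⟩ := exists_mem_pos_glue S hQ hH (sub_nonneg.2 hsx)
    (sub_lt_self x hs) hδ hQpos fun t ht => hHpos t ⟨ht.1, by linarith [ht.2]⟩
  refine ⟨R, hRS, fun t ht => hR t ht.1 ?_⟩
  rcases le_or_gt t x with htx | htx
  · exact Or.inl htx
  · exact Or.inr (hHδ t ⟨htx.le, ht.2⟩)

theorem exists_mem_pos_on_Icc (hpos : ∀ t : ℝ, 0 ≤ t → ∃ H ∈ S, 0 < aeval t H) {A : ℝ}
    (hA : 0 ≤ A) : ∃ Q ∈ S, ∀ t ∈ Set.Icc 0 A, 0 < aeval t Q := by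
  obtain ⟨ε, hε, hcover⟩ := lebesgue_number_lemma_of_metric (isCompact_Icc (a := 0) (b := A))
    (c := fun H : S => {t : ℝ | 0 < aeval t (H : ℤ[X])})
    (fun H => isOpen_lt continuous_const (Polynomial.continuous_aeval _))
    fun t ht => by
      obtain ⟨H, hH, hHt⟩ := hpos t ht.1
      exact Set.mem_iUnion.2 ⟨⟨H, hH⟩, hHt⟩
  obtain ⟨s, hs, hsε⟩ : ∃ s, 0 < s ∧ s < ε := ⟨ε / 2, half_pos hε, half_lt_self hε⟩
  have hball (x : ℝ) (hx : x ∈ Set.Icc 0 A) :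
      ∃ H ∈ S, ∀ t ∈ Set.Icc (x - s) (x + s), 0 < aeval t H := by
    obtain ⟨H, hH⟩ := hcover x hx
    refine ⟨H, H.2, fun t ht => hH ?_⟩
    rw [Metric.mem_ball, Real.dist_eq, abs_lt]
    constructor <;> linarith [ht.1, ht.2]
  have hmarch (m : ℕ) (hm : m * s ≤ A) :
      ∃ Q ∈ S, ∀ t ∈ Set.Icc 0 ((m + 1) * s), 0 < aeval t Q := by
    induction m with
    | zero =>
      obtain ⟨H, hHS, hH⟩ := hball 0 ⟨le_rfl, hA⟩
      exact ⟨H, hHS, fun t ht => hH t ⟨by linarith [ht.1], by simpa using ht.2⟩⟩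
    | succ m ih =>
      push_cast at hm ⊢
      obtain ⟨Q, hQS, hQ⟩ := ih (by nlinarith)
      obtain ⟨H, hHS, hH⟩ := hball _ ⟨by positivity, hm⟩
      simpa only [add_one_mul (m + 1 : ℝ)] using
        exists_mem_pos_on_Icc_add S hQS hHS hs (by nlinarith [m.cast_nonneg (α := ℝ)]) hQ hH
  have hfloor := Nat.floor_le (div_nonneg hA hs.le)
  obtain ⟨Q, hQS, hQ⟩ := hmarch ⌊A / s⌋₊ (by rwa [le_div_iff₀ hs] at hfloor)
  have hceil : A < (⌊A / s⌋₊ + 1) * s := by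
    have := Nat.lt_floor_add_one (A / s)
    rwa [div_lt_iff₀ hs] at this
  exact ⟨Q, hQS, fun t ht => hQ t ⟨ht.1, ht.2.trans hceil.le⟩⟩

theorem exists_mem_forall_pos (hpos : ∀ t : ℝ, 0 ≤ t → ∃ H ∈ S, 0 < aeval t H)
    (hlead : ∃ H ∈ S, 0 < H.leadingCoeff) : ∃ Q ∈ S, ∀ t : ℝ, 0 ≤ t → 0 < aeval t Q := by
  obtain ⟨H, hHS, hH⟩ := hlead
  have hHR : 0 < (H.map (algebraMap ℤ ℝ)).leadingCoeff := by
    rw [leadingCoeff_map_of_injective (RingHom.injective_int _), eq_intCast]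
    exact_mod_cast hH
  obtain ⟨δ, hδ, hev⟩ := exists_pos_eventually_le_eval hHR
  obtain ⟨A, hA⟩ := eventually_atTop.1 hev
  simp only [eval_map_algebraMap] at hA
  set A₀ := max A 0
  obtain ⟨Q, hQS, hQ⟩ := exists_mem_pos_on_Icc S hpos (A := A₀ + 1) (by positivity)
  obtain ⟨R, hRS, hR⟩ := exists_mem_pos_glue S hQS hHS (b₁ := A₀) (le_max_right _ _)
    (lt_add_one _) hδ hQ fun t ht => hδ.trans_le (hA t ((le_max_left _ _).trans ht.1))
  refine ⟨R, hRS, fun t ht => hR t ht ?_⟩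
  rcases le_or_gt t (A₀ + 1) with htA | htA
  · exact Or.inl htA
  · exact Or.inr (hA t (by linarith [le_max_left A 0]))

theorem exists_mem_natPoly_coeff_zero_pos (hpos : ∀ t : ℝ, 0 ≤ t → ∃ H ∈ S, 0 < aeval t H)
    (hlead : ∃ H ∈ S, 0 < H.leadingCoeff) : ∃ Q ∈ S, Q ∈ natPoly ∧ 0 < Q.coeff 0 := by
  obtain ⟨Q, hQS, hQ⟩ := exists_mem_forall_pos S hpos hlead
  obtain ⟨N, hN⟩ := exists_coeff_one_add_X_pow_mul_nonneg
    (p := Q.map (algebraMap ℤ ℝ)) (by simpa only [eval_map_algebraMap] using hQ)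
  refine ⟨(1 + X) ^ N * Q, mul_mem_of_mem (one_add_X_pow_mem N) hQS, mem_iff.2 fun k => ?_, ?_⟩
  · have hmap : (1 + X) ^ N * Q.map (algebraMap ℤ ℝ) = ((1 + X) ^ N * Q).map (algebraMap ℤ ℝ) := by
      simp
    have := hN k
    rw [hmap, coeff_map] at this
    simpa using this
  · have := hQ 0 le_rfl
    rw [← coeff_zero_eq_aeval_zero'] at this
    simpa [mul_coeff_zero, coeff_one_add_X_pow] using this

end Cone

theorem exists_leadingCoeff_pos {n : ℕ} (h : Fin n → ℤ[X])
    (hpos : ∀ t : ℝ, 0 ≤ t → ∃ j, 0 < aeval t (h j)) : ∃ j, 0 < (h j).leadingCoeff := by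
  by_contra! hneg
  have hev : ∀ᶠ t : ℝ in atTop, ∀ j, aeval t (h j) ≤ 0 := by
    refine eventually_all.2 fun j => ?_
    have : ((h j).map (algebraMap ℤ ℝ)).leadingCoeff ≤ 0 := by
      rw [leadingCoeff_map_of_injective (RingHom.injective_int _), eq_intCast]
      exact_mod_cast hneg j
    simpa only [eval_map_algebraMap] using eventually_eval_nonpos this
  obtain ⟨t, ht, ht0⟩ := (hev.and (eventually_ge_atTop 0)).exists
  obtain ⟨j, hj⟩ := hpos t ht0
  exact (ht j).not_gt hj

theorem exists_mem_span_natPoly_coeff_zero_pos {n : ℕ} (h : Fin n → ℤ[X])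
    (hpos : ∀ t : ℝ, 0 ≤ t → ∃ j, 0 < aeval t (h j)) :
    ∃ Q ∈ Submodule.span natPoly (Set.range h), Q ∈ natPoly ∧ 0 < Q.coeff 0 := by
  refine exists_mem_natPoly_coeff_zero_pos _ (fun t ht => ?_) ?_
  · obtain ⟨j, hj⟩ := hpos t ht
    exact ⟨h j, Submodule.subset_span ⟨j, rfl⟩, hj⟩
  · obtain ⟨j, hj⟩ := exists_leadingCoeff_pos h hpos
    exact ⟨h j, Submodule.subset_span ⟨j, rfl⟩, hj⟩

theorem exists_natPoly_relation {n : ℕ} (h : Fin n → ℤ[X]) {Q P : ℤ[X]}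
    (hQS : Q ∈ Submodule.span natPoly (Set.range h)) (hQ : Q ∈ natPoly) (hQ0 : Q ≠ 0)
    (hPS : P ∈ Submodule.span natPoly (Set.range (-h))) (hP : P - 1 ∈ natPoly) :
    ∃ f : Fin n → ℤ[X], (∀ i, f i ≠ 0) ∧ (∀ i, f i ∈ natPoly) ∧ ∑ i, f i * h i = 0 := by
  obtain ⟨q, hq⟩ := (Submodule.mem_span_range_iff_exists_fun _).1 hQS
  obtain ⟨p, hp⟩ := (Submodule.mem_span_range_iff_exists_fun _).1 hPS
  simp only [Subsemiring.smul_def, smul_eq_mul, Pi.neg_apply, mul_neg, sum_neg_distrib] at hq hp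
  obtain ⟨A, hA, hW⟩ := exists_mul_sub_mem hP (∑ i, h i)
  refine ⟨fun j => Q + (A * P - ∑ i, h i) * q j + Q * A * p j, fun j => ?_, fun j => ?_, ?_⟩
  · dsimp only
    rw [add_assoc]
    exact add_ne_zero_left hQ (add_mem (mul_mem hW (q j).2) (mul_mem (mul_mem hQ hA) (p j).2)) hQ0
  · exact add_mem (add_mem hQ (mul_mem hW (q j).2)) (mul_mem (mul_mem hQ hA) (p j).2)
  · simp only [add_mul, sum_add_distrib, mul_assoc, ← mul_sum, hq]
    rw [← neg_eq_iff_eq_neg.2 hp.symm]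
    ring

theorem stmt2_general (n : ℕ) (h : Fin n → Polynomial ℤ)
    (hnosol : ¬ ∃ f : Fin n → Polynomial ℤ,
      (∀ i, f i ≠ 0) ∧ (∀ i, ∀ k : ℕ, 0 ≤ (f i).coeff k) ∧ ∑ i, f i * h i = 0) :
    ∃ t : ℝ, 0 ≤ t ∧
      ((∀ i, 0 ≤ aeval t (h i)) ∨ (∀ i, aeval t (h i) ≤ 0)) := by
  by_contra! hsign
  obtain ⟨Q, hQS, hQ, hQ0⟩ := exists_mem_span_natPoly_coeff_zero_pos h fun t ht => (hsign t ht).2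
  obtain ⟨P, hPS, hP, hP0⟩ := exists_mem_span_natPoly_coeff_zero_pos (-h) fun t ht => by
    obtain ⟨i, hi⟩ := (hsign t ht).1
    exact ⟨i, by simpa using hi⟩
  obtain ⟨f, hf0, hf, hsum⟩ := exists_natPoly_relation h hQS hQ
    (fun hQ => by simp [hQ] at hQ0) hPS (sub_one_mem hP hP0)
  exact hnosol ⟨f, hf0, fun i => mem_iff.1 (hf i), hsum⟩

theorem stmt2 (n : ℕ) (h : Fin n → Polynomial ℤ)
    (hgcd : Finset.univ.gcd h = 1)
    (hnosol : ¬ ∃ f : Fin n → Polynomial ℤ,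
      (∀ i, f i ≠ 0) ∧ (∀ i, ∀ k : ℕ, 0 ≤ (f i).coeff k) ∧ ∑ i, f i * h i = 0) :
    ∃ t : ℝ, 0 ≤ t ∧
      ((∀ i, 0 ≤ aeval t (h i)) ∨ (∀ i, aeval t (h i) ≤ 0)) :=
  stmt2_general n h hnosol
end

section
/- Given h₁, ..., hₙ ∈ ℤ[X], the equation f₁h₁ + ⋯ + fₙhₙ = 0 has a solution with all fᵢ nonzero polynomials with non-negative integer coefficients if and only if it has a solution with all fᵢ nonzero polynomials with non-negative real coefficients. -/
/-!
Integer solutions map to real ones, so only the converse needs an argument. The equation has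
integer coefficients, so applying an additive map `ψ : ℝ → ℝ` coefficientwise to a real solution
`g` yields another solution. Expanding reals in a Hamel basis `b` of `ℝ` over `ℚ`, the maps
`x = ∑ cₜ bₜ ↦ ∑ cₜ wₜ` are `ℚ`-linear, equal the identity for `w = b`, and are `ℚ`-valued for
rational `w`; by density some rational `w` keeps all (finitely many) nonzero coefficients of `g`
positive. Clearing denominators then makes all the new coefficients integers.
-/
open Polynomial

theorem exists_linearMap_rat_pos_on (s : Finset ℝ) (hs : ∀ x ∈ s, 0 < x) :
    ∃ φ : ℝ →ₗ[ℚ] ℚ, ∀ x ∈ s, 0 < φ x := by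
  let B := Module.Basis.ofVectorSpace ℚ ℝ
  let ev (w : _ → ℝ) (x : ℝ) : ℝ := Finsupp.linearCombination ℚ w (B.repr x)
  have ev_basis (x : ℝ) : ev B x = x := B.linearCombination_repr x
  have continuous_ev (x : ℝ) : Continuous fun w => ev w x := by
    simp only [ev, Finsupp.linearCombination_apply, Finsupp.sum]
    fun_prop
  have eventually_pos : ∀ᶠ w in nhds (⇑B), ∀ x ∈ s, 0 < ev w x :=
    (Filter.eventually_all_finset s).2 fun x hx =>
      ((continuous_ev x).tendsto' _ _ (ev_basis x)).eventually_const_lt (hs x hx)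
  obtain ⟨r, hr⟩ := (DenseRange.piMap fun _ => Rat.denseRange_cast).mem_nhds eventually_pos
  refine ⟨(Finsupp.linearCombination ℚ r).comp B.repr.toLinearMap, fun x hx => ?_⟩
  have cast_ev : ev (Pi.map (fun _ => Rat.cast) r) x =
      ((Finsupp.linearCombination ℚ r (B.repr x) : ℚ) : ℝ) := by
    simp [ev, Finsupp.linearCombination_apply, Finsupp.sum, Rat.smul_def]
  exact_mod_cast cast_ev ▸ hr x hx

theorem exists_linearMap_pos_int_on (s : Finset ℝ) (hs : ∀ x ∈ s, 0 < x) :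
    ∃ ψ : ℝ →ₗ[ℚ] ℝ, ∀ x ∈ s, 0 < ψ x ∧ ψ x ∈ Set.range ((↑) : ℤ → ℝ) := by
  obtain ⟨φ, hφ⟩ := exists_linearMap_rat_pos_on s hs
  obtain ⟨b, hb⟩ := IsLocalization.exist_integer_multiples_of_finset (nonZeroDivisors ℤ) (s.image φ)
  have hb0 : ((b : ℤ) : ℚ) ≠ 0 := Int.cast_ne_zero.2 (nonZeroDivisors.coe_ne_zero b)
  -- `b` may be negative, hence the scaling by `b * b`.
  refine ⟨Algebra.linearMap ℚ ℝ ∘ₗ (((b : ℤ) * b : ℚ) • φ), fun x hx => ?_⟩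
  obtain ⟨z, hz⟩ := hb (φ x) (Finset.mem_image_of_mem φ hx)
  simp only [algebraMap_int_eq, eq_intCast, zsmul_eq_mul] at hz
  have hψ : (Algebra.linearMap ℚ ℝ ∘ₗ (((b : ℤ) * b : ℚ) • φ)) x = ((b * z : ℤ) : ℚ) := by
    simp [hz, mul_assoc]
  rw [hψ]
  refine ⟨?_, b * z, by norm_cast⟩
  rw [Rat.cast_pos, Int.cast_mul, hz, ← mul_assoc]
  exact mul_pos (mul_self_pos.2 hb0) (hφ x hx)

namespace Polynomial

section MapCoeffs

variable {A B : Type*}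

noncomputable def mapCoeffs [Semiring A] [Semiring B] (ψ : A →+ B) (p : A[X]) : B[X] :=
  ⟨AddMonoidAlgebra.map ψ p.toFinsupp⟩

@[simp]
theorem coeff_mapCoeffs [Semiring A] [Semiring B] (ψ : A →+ B) (p : A[X]) (k : ℕ) :
    (mapCoeffs ψ p).coeff k = ψ (p.coeff k) :=
  rfl

@[simp]
theorem mapCoeffs_zero [Semiring A] [Semiring B] (ψ : A →+ B) : mapCoeffs ψ 0 = 0 := by
  ext; simp

theorem mapCoeffs_sum_mul_map_intCast [Ring A] [Ring B] {ι : Type*} (ψ : A →+ B) (s : Finset ι)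
    (g : ι → A[X]) (h : ι → ℤ[X]) :
    mapCoeffs ψ (∑ i ∈ s, g i * (h i).map (Int.castRingHom A)) =
      ∑ i ∈ s, mapCoeffs ψ (g i) * (h i).map (Int.castRingHom B) := by
  have map_mul_intCast (a : A) (m : ℤ) : ψ (a * m) = ψ a * m := by
    rw [← Int.cast_comm, ← zsmul_eq_mul, map_zsmul, zsmul_eq_mul, Int.cast_comm]
  ext k
  simp [finsetSum_coeff, coeff_mul, map_mul_intCast]

end MapCoeffs

end Polynomial

theorem exists_intPolynomial_mapCoeffs_of_nonneg {ι : Type*} [Fintype ι] (g : ι → ℝ[X])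
    (hg : ∀ i k, 0 ≤ (g i).coeff k) :
    ∃ ψ : ℝ →ₗ[ℚ] ℝ, ∃ F : ι → ℤ[X],
      (∀ i, (F i).map (Int.castRingHom ℝ) = mapCoeffs ψ.toAddMonoidHom (g i)) ∧
      (∀ i k, 0 ≤ (F i).coeff k) ∧ ∀ i, g i ≠ 0 → F i ≠ 0 := by
  obtain ⟨ψ, hψ⟩ := exists_linearMap_pos_int_on (Finset.univ.biUnion fun i => (g i).coeffs) <| by
    simp only [Finset.mem_biUnion, Finset.mem_univ, true_and, mem_coeffs_iff, mem_support_iff]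
    rintro _ ⟨i, k, hk, rfl⟩
    exact (hg i k).lt_of_ne' hk
  have hψ_coeff (i k) (hk : (g i).coeff k ≠ 0) :
      0 < ψ ((g i).coeff k) ∧ ψ ((g i).coeff k) ∈ Set.range ((↑) : ℤ → ℝ) :=
    hψ _ (Finset.mem_biUnion.2 ⟨i, Finset.mem_univ _, coeff_mem_coeffs hk⟩)
  have exists_lift (i) :
      ∃ F : ℤ[X], F.map (Int.castRingHom ℝ) = mapCoeffs ψ.toAddMonoidHom (g i) := by
    refine (mem_lifts _).1 ((lifts_iff_coeff_lifts _).2 fun k => ?_)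
    by_cases hk : (g i).coeff k = 0
    · simp [hk]
    · simpa using (hψ_coeff i k hk).2
  choose F hF using exists_lift
  have hF_coeff (i k) : ((F i).coeff k : ℝ) = ψ ((g i).coeff k) := by
    simpa using congrArg (coeff · k) (hF i)
  refine ⟨ψ, F, hF, fun i k => ?_, fun i hi hFi => ?_⟩
  · have : (0 : ℝ) ≤ (F i).coeff k := by
      rw [hF_coeff]
      by_cases hk : (g i).coeff k = 0
      · simp [hk]
      · exact (hψ_coeff i k hk).1.le
    exact_mod_cast this
  · obtain ⟨k, hk⟩ := support_nonempty.2 hi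
    have := hF_coeff i k
    simp only [hFi, coeff_zero, Int.cast_zero] at this
    exact (hψ_coeff i k (mem_support_iff.1 hk)).1.ne this

theorem stmt3 (n : ℕ) (h : Fin n → Polynomial ℤ) :
    (∃ f : Fin n → Polynomial ℤ,
      (∀ i, f i ≠ 0) ∧ (∀ i, ∀ k : ℕ, 0 ≤ (f i).coeff k) ∧ ∑ i, f i * h i = 0) ↔
    (∃ g : Fin n → Polynomial ℝ,
      (∀ i, g i ≠ 0) ∧ (∀ i, ∀ k : ℕ, 0 ≤ (g i).coeff k) ∧
      ∑ i, g i * (h i).map (Int.castRingHom ℝ) = 0) := by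
  constructor
  · rintro ⟨f, hf0, hf_nonneg, hf_sum⟩
    refine ⟨fun i => (f i).map (Int.castRingHom ℝ), fun i => ?_, fun i k => ?_, ?_⟩
    · exact (Polynomial.map_ne_zero_iff Int.cast_injective).2 (hf0 i)
    · simpa using hf_nonneg i k
    · simpa [Polynomial.map_sum] using congrArg (Polynomial.map (Int.castRingHom ℝ)) hf_sum
  · rintro ⟨g, hg0, hg_nonneg, hg_sum⟩
    obtain ⟨ψ, F, hF, hF_nonneg, hF0⟩ := exists_intPolynomial_mapCoeffs_of_nonneg g hg_nonneg
    refine ⟨F, fun i => hF0 i (hg0 i), hF_nonneg,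
      map_injective (Int.castRingHom ℝ) Int.cast_injective ?_⟩
    simpa [Polynomial.map_sum, ← hF, hg_sum] using
      (mapCoeffs_sum_mul_map_intCast ψ.toAddMonoidHom Finset.univ g h).symm
end

section
/- Given h₁, ..., hₙ ∈ ℤ[X], the equation f₁h₁ + ⋯ + fₙhₙ = 0 has a solution with all fᵢ nonzero real polynomials with non-negative coefficients if and only if it has a solution with all fᵢ real polynomials strictly positive on (0, ∞). -/
/-!
Non-zero polynomials with non-negative coefficients are positive on `(0, ∞)`, which gives one
direction. Conversely, it suffices to find for each `f` positive on `(0, ∞)` a non-zero `g` with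
non-negative coefficients such that `g * f` also has non-negative coefficients: the product `G` of
these multipliers works for all `fᵢ` at once, and the `G * fᵢ` solve the equation.

Such multipliers are multiplicative, and `f` splits into factors `X - r` with `r ≤ 0`, positive
constants and monic quadratics `q = X² + bX + c` with `b² < 4c`. For `q` with `b < 0`,
`q(X) q(-X) = Q(X²)` where `Q = X² + (2c - b²)X + c²` is again of this form, with the squared roots.
Squaring the roots at least doubles `(4c - b²)/c` as long as `b² > 2c`, so after finitely many steps
the middle coefficient becomes non-negative.
-/

open Polynomial

namespace Polynomial

section NonnegCoeffs

variable (R : Type*) [CommSemiring R] [PartialOrder R] [IsOrderedRing R]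

def nonnegCoeffs : Subsemiring R[X] where
  carrier := {p | ∀ n, 0 ≤ p.coeff n}
  mul_mem' {p q} hp hq n := by
    rw [coeff_mul]
    exact Finset.sum_nonneg fun x _ => mul_nonneg (hp _) (hq _)
  one_mem' n := by
    rw [coeff_one]
    split_ifs <;> simp
  add_mem' {p q} hp hq n := by
    rw [coeff_add]
    exact add_nonneg (hp n) (hq n)
  zero_mem' n := by simp

variable {R}

lemma C_mem_nonnegCoeffs {a : R} (ha : 0 ≤ a) : C a ∈ nonnegCoeffs R := fun n => by
  rw [coeff_C]
  split_ifs <;> simp [ha]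

lemma X_mem_nonnegCoeffs : X ∈ nonnegCoeffs R := fun n => by
  rw [coeff_X]
  split_ifs <;> simp

lemma expand_mem_nonnegCoeffs {p : R[X]} (hp : p ∈ nonnegCoeffs R) {k : ℕ} (hk : 0 < k) :
    expand R k p ∈ nonnegCoeffs R := fun n => by
  rw [coeff_expand hk]
  split_ifs
  exacts [hp _, le_rfl]

lemma X_sq_add_C_mul_X_add_C_mem_nonnegCoeffs {b c : R} (hb : 0 ≤ b) (hc : 0 ≤ c) :
    X ^ 2 + C b * X + C c ∈ nonnegCoeffs R :=
  add_mem (add_mem (pow_mem X_mem_nonnegCoeffs 2)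
    (mul_mem (C_mem_nonnegCoeffs hb) X_mem_nonnegCoeffs)) (C_mem_nonnegCoeffs hc)

end NonnegCoeffs

lemma eval_pos_of_mem_nonnegCoeffs {R : Type*} [CommSemiring R] [PartialOrder R]
    [IsStrictOrderedRing R] {p : R[X]} (hp : p ∈ nonnegCoeffs R)
    (hp0 : p ≠ 0) {x : R} (hx : 0 < x) : 0 < p.eval x := by
  rw [eval_eq_sum_range]
  refine Finset.sum_pos' (fun i _ => mul_nonneg (hp i) (pow_nonneg hx.le i))
    ⟨p.natDegree, Finset.self_mem_range_succ _, mul_pos ?_ (pow_pos hx _)⟩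
  exact (hp _).lt_of_ne' (leadingCoeff_ne_zero.mpr hp0)

section HasNonnegMultiple

variable {R : Type*} [CommSemiring R] [PartialOrder R] [IsOrderedRing R]

def HasNonnegMultiple (p : R[X]) : Prop :=
  ∃ g ∈ nonnegCoeffs R, g ≠ 0 ∧ g * p ∈ nonnegCoeffs R

lemma HasNonnegMultiple.of_mem [Nontrivial R] {p : R[X]} (hp : p ∈ nonnegCoeffs R) :
    HasNonnegMultiple p :=
  ⟨1, one_mem _, one_ne_zero, by rwa [one_mul]⟩

lemma HasNonnegMultiple.mul [NoZeroDivisors R] {p q : R[X]} (hp : HasNonnegMultiple p)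
    (hq : HasNonnegMultiple q) : HasNonnegMultiple (p * q) := by
  obtain ⟨g, hg, hg0, hgp⟩ := hp
  obtain ⟨h, hh, hh0, hhq⟩ := hq
  refine ⟨g * h, mul_mem hg hh, mul_ne_zero hg0 hh0, ?_⟩
  rw [mul_mul_mul_comm]
  exact mul_mem hgp hhq

lemma exists_ne_zero_forall_mul_mem_nonnegCoeffs [Nontrivial R] [NoZeroDivisors R]
    {ι : Type*} [Fintype ι] {p : ι → R[X]} (hp : ∀ i, HasNonnegMultiple (p i)) :
    ∃ g ≠ 0, ∀ i, g * p i ∈ nonnegCoeffs R := by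
  classical
  choose g hg hg0 hgp using hp
  refine ⟨∏ j, g j, Finset.prod_ne_zero_iff.mpr fun j _ => hg0 j, fun i => ?_⟩
  rw [← Finset.prod_erase_mul _ _ (Finset.mem_univ i), mul_assoc]
  exact mul_mem (prod_mem fun j _ => hg j) (hgp i)

end HasNonnegMultiple

section Quadratic

lemma X_sq_add_mul_X_sq_sub_eq_expand {R : Type*} [CommRing R] (b c : R) :
    (X ^ 2 + C b * X + C c) * (X ^ 2 - C b * X + C c) =
      expand R 2 (X ^ 2 + C (2 * c - b ^ 2) * X + C (c ^ 2)) := by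
  simp only [map_add, map_sub, map_mul, map_pow, map_ofNat, expand_X, expand_C]
  ring

variable {b c : ℝ}

lemma HasNonnegMultiple.of_roots_sq (hb : b ≤ 0) (hc : 0 ≤ c)
    (h : HasNonnegMultiple (X ^ 2 + C (2 * c - b ^ 2) * X + C (c ^ 2))) :
    HasNonnegMultiple (X ^ 2 + C b * X + C c) := by
  obtain ⟨g, hg, hg0, hgq⟩ := h
  have hq' : X ^ 2 - C b * X + C c ∈ nonnegCoeffs ℝ := by
    simpa only [sub_eq_add_neg, ← neg_mul, ← C_neg] using
      X_sq_add_C_mul_X_add_C_mem_nonnegCoeffs (neg_nonneg.mpr hb) hc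
  have hq'0 : (X ^ 2 - C b * X + C c : ℝ[X]) ≠ 0 := fun h0 => by
    simpa using congrArg (coeff · 2) h0
  refine ⟨expand ℝ 2 g * (X ^ 2 - C b * X + C c), mul_mem (expand_mem_nonnegCoeffs hg two_pos) hq',
    mul_ne_zero ((expand_ne_zero two_pos).mpr hg0) hq'0, ?_⟩
  rw [mul_assoc, mul_comm (X ^ 2 - _ + _), X_sq_add_mul_X_sq_sub_eq_expand, ← map_mul]
  exact expand_mem_nonnegCoeffs hgq two_pos

lemma hasNonnegMultiple_X_sq_add_C_mul_X_add_C (hdisc : b ^ 2 < 4 * c) :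
    HasNonnegMultiple (X ^ 2 + C b * X + C c) := by
  obtain ⟨k, hk⟩ : ∃ k : ℕ, 4 * c ≤ 2 ^ k * (4 * c - b ^ 2) := by
    obtain ⟨k, hk⟩ := pow_unbounded_of_one_lt (4 * c / (4 * c - b ^ 2)) one_lt_two
    exact ⟨k, ((div_lt_iff₀ (by linarith)).mp hk).le⟩
  induction k generalizing b c with
  | zero =>
    have hb : b = 0 := by nlinarith
    exact .of_mem (X_sq_add_C_mul_X_add_C_mem_nonnegCoeffs hb.ge (by nlinarith))
  | succ k ih =>
    rcases le_or_gt 0 b with hb | hb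
    · exact .of_mem (X_sq_add_C_mul_X_add_C_mem_nonnegCoeffs hb (by nlinarith))
    refine .of_roots_sq hb.le (by nlinarith) ?_
    rcases le_or_gt 0 (2 * c - b ^ 2) with hb' | hb'
    · exact .of_mem (X_sq_add_C_mul_X_add_C_mem_nonnegCoeffs hb' (sq_nonneg c))
    · refine ih (by nlinarith) ?_
      rw [pow_succ] at hk
      nlinarith

end Quadratic

lemma Monic.exists_eq_X_sq_add_of_irreducible {q : ℝ[X]} (hm : q.Monic) (hirr : Irreducible q)
    (hroot : ∀ x, ¬ q.IsRoot x) : ∃ b c : ℝ, b ^ 2 < 4 * c ∧ q = X ^ 2 + C b * X + C c := by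
  have hdeg : q.natDegree = 2 := by
    have h1 : q.natDegree ≠ 1 := fun h =>
      (exists_root_of_degree_eq_one (degree_eq_iff_natDegree_eq_of_pos one_pos |>.mpr h)).elim
        hroot
    have := hirr.natDegree_pos
    have := hirr.natDegree_le_two
    omega
  obtain ⟨b, c, rfl⟩ : ∃ b c : ℝ, q = X ^ 2 + C b * X + C c := by
    refine ⟨q.coeff 1, q.coeff 0, ?_⟩
    conv_lhs => rw [eq_quadratic_of_degree_le_two (natDegree_le_iff_degree_le.mp hdeg.le)]
    rw [← hdeg, hm.coeff_natDegree, C_1, one_mul]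
  refine ⟨b, c, ?_, rfl⟩
  by_contra! hdisc
  obtain ⟨s, hs⟩ : ∃ s : ℝ, s ^ 2 = b ^ 2 - 4 * c := ⟨√(b ^ 2 - 4 * c), Real.sq_sqrt (by linarith)⟩
  apply hroot ((s - b) / 2)
  simp only [IsRoot, eval_add, eval_mul, eval_pow, eval_X, eval_C]
  linear_combination hs / 4

lemma exists_mul_hasNonnegMultiple_of_pos {p : ℝ[X]} (hp : ∀ x, 0 < x → 0 < p.eval x)
    (hdeg : 0 < p.natDegree) :
    ∃ q s, p = q * s ∧ 0 < q.natDegree ∧ (∀ x, 0 < x → 0 < q.eval x) ∧ HasNonnegMultiple q := by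
  by_cases hroot : ∃ r, p.IsRoot r
  · obtain ⟨r, hr⟩ := hroot
    have hr0 : r ≤ 0 := by
      by_contra! hr0
      exact (hp r hr0).ne' hr
    obtain ⟨s, rfl⟩ := dvd_iff_isRoot.mpr hr
    refine ⟨X - C r, s, rfl, by rw [natDegree_X_sub_C]; exact one_pos, fun x hx => ?_, .of_mem ?_⟩
    · simpa using hx.trans_le' hr0
    · rw [sub_eq_add_neg, ← C_neg]
      exact add_mem X_mem_nonnegCoeffs (C_mem_nonnegCoeffs (neg_nonneg.mpr hr0))
  · push Not at hroot
    obtain ⟨q, hm, hirr, s, rfl⟩ :=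
      exists_monic_irreducible_factor p (not_isUnit_of_natDegree_pos p hdeg)
    obtain ⟨b, c, hdisc, rfl⟩ :=
      hm.exists_eq_X_sq_add_of_irreducible hirr fun x hx => hroot x (hx.dvd (dvd_mul_right _ _))
    refine ⟨_, s, rfl, hirr.natDegree_pos, fun x _ => ?_,
      hasNonnegMultiple_X_sq_add_C_mul_X_add_C hdisc⟩
    simp only [eval_add, eval_mul, eval_pow, eval_X, eval_C]
    nlinarith [sq_nonneg (2 * x + b)]

theorem hasNonnegMultiple_of_pos {p : ℝ[X]} (hp : ∀ x, 0 < x → 0 < p.eval x) :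
    HasNonnegMultiple p := by
  induction hn : p.natDegree using Nat.strong_induction_on generalizing p with
  | _ n ih =>
  rcases Nat.eq_zero_or_pos n with rfl | hdeg
  · rw [eq_C_of_natDegree_eq_zero hn] at hp ⊢
    exact .of_mem (C_mem_nonnegCoeffs (by simpa using (hp 1 one_pos).le))
  obtain ⟨q, s, rfl, hq, hqpos, hqm⟩ := exists_mul_hasNonnegMultiple_of_pos hp (hn ▸ hdeg)
  have hspos : ∀ x, 0 < x → 0 < s.eval x := fun x hx =>
    pos_of_mul_pos_right (by simpa using hp x hx) (hqpos x hx).le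
  have hq0 : q ≠ 0 := ne_zero_of_natDegree_gt hq
  have hs0 : s ≠ 0 := fun h => by simpa [h] using hspos 1 one_pos
  refine hqm.mul (ih s.natDegree ?_ hspos rfl)
  rw [← hn, natDegree_mul hq0 hs0]
  omega

end Polynomial

theorem stmt4 (n : ℕ) (h : Fin n → Polynomial ℤ) :
    (∃ f : Fin n → Polynomial ℝ,
      (∀ i, f i ≠ 0) ∧ (∀ i, ∀ k : ℕ, 0 ≤ (f i).coeff k) ∧
      ∑ i, f i * (h i).map (Int.castRingHom ℝ) = 0) ↔
    (∃ f : Fin n → Polynomial ℝ,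
      (∀ i, ∀ x : ℝ, 0 < x → 0 < (f i).eval x) ∧
      ∑ i, f i * (h i).map (Int.castRingHom ℝ) = 0) := by
  constructor
  · rintro ⟨f, hf0, hf, hsum⟩
    exact ⟨f, fun i x hx => eval_pos_of_mem_nonnegCoeffs (hf i) (hf0 i) hx, hsum⟩
  · rintro ⟨f, hf, hsum⟩
    obtain ⟨g, hg0, hgf⟩ := exists_ne_zero_forall_mul_mem_nonnegCoeffs fun i =>
      hasNonnegMultiple_of_pos (hf i)
    have hf0 : ∀ i, f i ≠ 0 := fun i h0 => by simpa [h0] using hf i 1 one_pos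
    refine ⟨fun i => g * f i, fun i => mul_ne_zero hg0 (hf0 i), hgf, ?_⟩
    simp_rw [mul_assoc, ← Finset.mul_sum, hsum, mul_zero]
end

section
/- (Pólya-type consequence, univariate case) If F ∈ ℝ[X] satisfies F(x) > 0 for all x ≥ 0 and the leading coefficient of F is positive, then there exists p ∈ ℕ such that (X+1)^p · F has all coefficients non-negative. -/
open Polynomial

/-!
Polynomials with non-negative coefficients are closed under products, and so are polynomials
admitting a Pólya exponent. A real polynomial without roots on `[0, ∞)` factors into a positive
constant, linear factors `X - r` with `r < 0`, and quadratics `X ^ 2 - b X + c` with `b ^ 2 < 4 c`.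
The first two have non-negative coefficients already. For the quadratic, the coefficient of
`X ^ (k + 2)` in `(X + 1) ^ p * (X ^ 2 - b X + c)` is, up to the positive factor
`(p choose k) / (u (u + 1))` with `u = k + 1`, `s = p - k`, the value
`u (u + 1) - b s (u + 1) + c s (s - 1)`; its quadratic part is positive definite and dominates the
linear part once `u + s = p + 1` is large.
-/

namespace Polynomial

section Semiring

variable {R : Type*} [Semiring R] [PartialOrder R]

def NonnegCoeffs (F : R[X]) : Prop := ∀ k, 0 ≤ F.coeff k

theorem nonnegCoeffs_C {a : R} (ha : 0 ≤ a) : (C a).NonnegCoeffs := fun k => by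
  rw [coeff_C]; split_ifs <;> simp [ha]

theorem NonnegCoeffs.mul [IsOrderedRing R] {A B : R[X]} (hA : A.NonnegCoeffs)
    (hB : B.NonnegCoeffs) : (A * B).NonnegCoeffs := fun k => by
  rw [coeff_mul]
  exact Finset.sum_nonneg fun _ _ => mul_nonneg (hA _) (hB _)

end Semiring

section CommSemiring

variable {R : Type*} [CommSemiring R] [PartialOrder R]

def HasPolyaExponent (F : R[X]) : Prop := ∃ p : ℕ, ((X + 1) ^ p * F).NonnegCoeffs

theorem NonnegCoeffs.hasPolyaExponent {F : R[X]} (hF : F.NonnegCoeffs) : F.HasPolyaExponent :=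
  ⟨0, by rwa [pow_zero, one_mul]⟩

theorem HasPolyaExponent.mul [IsOrderedRing R] {A B : R[X]} (hA : A.HasPolyaExponent)
    (hB : B.HasPolyaExponent) : (A * B).HasPolyaExponent := by
  obtain ⟨p, hp⟩ := hA
  obtain ⟨q, hq⟩ := hB
  refine ⟨p + q, ?_⟩
  rw [show (X + 1) ^ (p + q) * (A * B) = ((X + 1) ^ p * A) * ((X + 1) ^ q * B) by ring]
  exact hp.mul hq

end CommSemiring

theorem nonnegCoeffs_X_sub_C {R : Type*} [CommRing R] [PartialOrder R] [IsOrderedRing R]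
    {r : R} (hr : r ≤ 0) : (X - C r).NonnegCoeffs := by
  rintro (_ | _ | k) <;> simp [coeff_X, coeff_C, hr]

end Polynomial

theorem Nat.cast_choose_succ_mul {R : Type*} [Ring R] (n k : ℕ) :
    (n.choose (k + 1) : R) * (k + 1) = n.choose k * (n - k) := by
  rcases le_or_gt k n with hkn | hnk
  · exact_mod_cast congrArg (Nat.cast : ℕ → R) (Nat.choose_succ_right_eq n k) |>.trans
      (by rw [Nat.cast_mul, Nat.cast_sub hkn])
  · simp [Nat.choose_eq_zero_of_lt hnk, Nat.choose_eq_zero_of_lt (Nat.lt_succ_of_lt hnk)]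

theorem exists_forall_nonneg_of_sq_lt {b c : ℝ} (hd : b ^ 2 < 4 * c) :
    ∃ N : ℝ, ∀ u s : ℝ, 1 ≤ u → 0 ≤ s → N ≤ u + s →
      0 ≤ u * (u + 1) - b * s * (u + 1) + c * s * (s - 1) := by
  set δ := (4 * c - b ^ 2) / (4 * (1 + c))
  have hc : 0 < c := by nlinarith [sq_nonneg b]
  have hδ : 0 < δ := by positivity
  have hδ1 : δ < 1 := by rw [div_lt_one (by positivity)]; nlinarith
  have hδ' : 4 * (1 - δ) * (c - δ) - b ^ 2 = 4 * δ ^ 2 := by simp only [δ]; field_simp; ring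
  -- `δ` is chosen so that `(1 - δ) u ^ 2 - b s u + (c - δ) s ^ 2` is a sum of squares
  have hQ : ∀ u s : ℝ, δ * (u ^ 2 + s ^ 2) ≤ u ^ 2 - b * s * u + c * s ^ 2 := fun u s => by
    nlinarith [sq_nonneg (2 * (1 - δ) * u - b * s), sq_nonneg (δ * s), mul_pos hδ hδ]
  refine ⟨2 * |b + c| / δ, fun u s hu hs hN => ?_⟩
  have hN' : 2 * |b + c| ≤ δ * (u + s) := by rw [div_le_iff₀ hδ] at hN; linarith
  have hsum : 2 * |b + c| * (u + s) ≤ 2 * δ * (u ^ 2 + s ^ 2) := by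
    nlinarith [mul_le_mul_of_nonneg_right hN' (by linarith : 0 ≤ u + s), sq_nonneg (u - s)]
  nlinarith [hQ u s, le_abs_self (b + c), abs_nonneg (b + c),
    mul_nonneg (abs_nonneg (b + c)) (by linarith : 0 ≤ u)]

namespace Polynomial

theorem coeff_X_add_one_pow_mul_quadratic (p k : ℕ) (b c : ℝ) :
    ((X + 1) ^ p * (X ^ 2 - C b * X + C c)).coeff (k + 2) =
      p.choose k - b * p.choose (k + 1) + c * p.choose (k + 2) := by
  rw [show (X + 1) ^ p * (X ^ 2 - C b * X + C c) =
      X ^ 2 * (X + 1) ^ p - C b * (X * (X + 1) ^ p) + C c * (X + 1) ^ p by ring]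
  simp only [coeff_add, coeff_sub, coeff_C_mul, coeff_X_pow_mul, coeff_X_mul, coeff_X_add_one_pow]

theorem hasPolyaExponent_quadratic {b c : ℝ} (hd : b ^ 2 < 4 * c) :
    (X ^ 2 - C b * X + C c).HasPolyaExponent := by
  have hc : 0 < c := by nlinarith [sq_nonneg b]
  obtain ⟨N, hN⟩ := exists_forall_nonneg_of_sq_lt hd
  obtain ⟨p, hp⟩ := exists_nat_ge (max N (b / c))
  refine ⟨p, ?_⟩
  rintro (_ | _ | k)
  · simp [coeff_zero_eq_eval_zero, hc.le]
  · have hbp : b ≤ p * c := (div_le_iff₀ hc).mp (le_of_max_le_right hp)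
    simp [coeff_mul, Finset.Nat.sum_antidiagonal_succ, coeff_X, coeff_C, coeff_X_add_one_pow, hbp]
  · rw [coeff_X_add_one_pow_mul_quadratic]
    set E : ℝ := p.choose k - b * p.choose (k + 1) + c * p.choose (k + 2)
    set u : ℝ := k + 1
    set s : ℝ := p - k
    have h₁ := Nat.cast_choose_succ_mul (R := ℝ) p k
    have h₂ := Nat.cast_choose_succ_mul (R := ℝ) p (k + 1)
    push_cast at h₁ h₂
    have hE : E * (u * (u + 1)) =
        p.choose k * (u * (u + 1) - b * s * (u + 1) + c * s * (s - 1)) := by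
      linear_combination (-b * (u + 1) + c * (s - 1)) * h₁ + c * u * h₂
    have hR : 0 ≤ (p.choose k : ℝ) * (u * (u + 1) - b * s * (u + 1) + c * s * (s - 1)) := by
      rcases le_or_gt k p with hkp | hpk
      · refine mul_nonneg (Nat.cast_nonneg _) (hN u s ?_ ?_ ?_)
        · simp [u]
        · simp [s, hkp]
        · simp only [u, s]; linarith [le_of_max_le_left hp]
      · simp [Nat.choose_eq_zero_of_lt hpk]
    exact (mul_nonneg_iff_of_pos_right (by positivity)).mp (hE ▸ hR)

theorem exists_dvd_hasPolyaExponent_of_forall_pos {F : ℝ[X]} (hdeg : 0 < F.natDegree)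
    (hpos : ∀ x, 0 ≤ x → 0 < F.eval x) :
    ∃ q : ℝ[X], q ∣ F ∧ 0 < q.natDegree ∧ (∀ x, 0 ≤ x → 0 < q.eval x) ∧ q.HasPolyaExponent := by
  obtain ⟨z, hz⟩ :=
    IsAlgClosed.exists_aeval_eq_zero ℂ F (natDegree_pos_iff_degree_pos.mp hdeg).ne'
  by_cases him : z.im = 0
  · have hre : (z.re : ℂ) = z := Complex.ext rfl (by simp [him])
    rw [← hre, ← Complex.coe_algebraMap, aeval_algebraMap_apply_eq_algebraMap_eval,
      Complex.coe_algebraMap, Complex.ofReal_eq_zero] at hz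
    have hr : z.re < 0 := by
      by_contra! h
      exact (hpos _ h).ne' hz
    refine ⟨X - C z.re, dvd_iff_isRoot.mpr hz, by simp, fun x hx => ?_,
      (nonnegCoeffs_X_sub_C hr.le).hasPolyaExponent⟩
    simp only [eval_sub, eval_X, eval_C]
    linarith
  · have hnorm : ‖z‖ ^ 2 = z.re ^ 2 + z.im ^ 2 := by
      rw [Complex.sq_norm, Complex.normSq_apply]; ring
    have him2 : 0 < z.im ^ 2 := by positivity
    have hq : (X ^ 2 - C (2 * z.re) * X + C (‖z‖ ^ 2)).natDegree = 2 := by compute_degree!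
    refine ⟨_, F.quadratic_dvd_of_aeval_eq_zero_im_ne_zero hz him, by rw [hq]; norm_num,
      fun x _ => ?_, hasPolyaExponent_quadratic (by rw [hnorm]; nlinarith)⟩
    simp only [eval_add, eval_sub, eval_pow, eval_mul, eval_X, eval_C, hnorm]
    nlinarith [sq_nonneg (x - z.re)]

theorem hasPolyaExponent_of_forall_pos {F : ℝ[X]} (hpos : ∀ x, 0 ≤ x → 0 < F.eval x) :
    F.HasPolyaExponent := by
  induction hn : F.natDegree using Nat.strong_induction_on generalizing F with
  | _ n ih =>
  rcases Nat.eq_zero_or_pos n with rfl | hn0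
  · rw [eq_C_of_natDegree_eq_zero hn]
    refine (nonnegCoeffs_C ?_).hasPolyaExponent
    simpa [coeff_zero_eq_eval_zero] using (hpos 0 le_rfl).le
  · obtain ⟨q, ⟨G, rfl⟩, hq, hqpos, hqP⟩ :=
      exists_dvd_hasPolyaExponent_of_forall_pos (hn ▸ hn0) hpos
    have hGpos : ∀ x, 0 ≤ x → 0 < G.eval x := fun x hx =>
      pos_of_mul_pos_right (by simpa only [eval_mul] using hpos x hx) (hqpos x hx).le
    have hG : G ≠ 0 := by rintro rfl; simpa using hpos 0 le_rfl
    refine hqP.mul (ih G.natDegree ?_ hGpos rfl)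
    rw [← hn, natDegree_mul (ne_zero_of_natDegree_gt hq) hG]
    omega

end Polynomial

theorem stmt5_general (F : Polynomial ℝ)
    (hpos : ∀ x : ℝ, 0 ≤ x → 0 < F.eval x) :
    ∃ p : ℕ, ∀ k : ℕ, 0 ≤ (((X + 1) ^ p * F).coeff k) :=
  hasPolyaExponent_of_forall_pos hpos

theorem stmt5 (F : Polynomial ℝ)
    (hpos : ∀ x : ℝ, 0 ≤ x → 0 < F.eval x)
    (hlead : 0 < F.leadingCoeff) :
    ∃ p : ℕ, ∀ k : ℕ, 0 ≤ (((X + 1) ^ p * F).coeff k) :=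
  stmt5_general F hpos
end

section
/- Let h₁, ..., hₙ ∈ ℤ[X] with h₁(0) = ⋯ = h_k(0) = 0 and h_{k+1}(0) > 0, ..., hₙ(0) > 0, where 1 ≤ k < n. Then f₁h₁ + ⋯ + fₙhₙ = 0 has a solution over nonzero polynomials with ℕ-coefficients if and only if f₁·(h₁/X) + ⋯ + f_k·(h_k/X) + f_{k+1}h_{k+1} + ⋯ + fₙhₙ = 0 has such a solution. -/
/-!
Evaluating `∑ fᵢ hᵢ = 0` at `0` gives `∑ fᵢ(0) hᵢ(0) = 0`, a sum of non-negative terms, so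
`fᵢ(0) = 0` whenever `hᵢ(0) > 0`. Hence in a solution of the first equation the `fᵢ` with `i ≥ k`
are divisible by `X`; moving this factor `X` from `fᵢ` (for `i ≥ k`) onto `hᵢ = X · (hᵢ / X)`
(for `i < k`) divides the whole equation by `X`. Conversely, multiplying the `fᵢ` with `i ≥ k`
of a solution of the second equation by `X` multiplies the equation by `X`.
-/

open Polynomial

namespace Polynomial

variable {ι R : Type*} [Fintype ι]

section Semiring

variable [CommSemiring R]

def IsNonnegSolution [Preorder R] (h f : ι → R[X]) : Prop :=
  (∀ i, f i ≠ 0) ∧ (∀ i m, 0 ≤ (f i).coeff m) ∧ ∑ i, f i * h i = 0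

theorem coeff_X_mul_nonneg_iff [Preorder R] {p : R[X]} :
    (∀ m, 0 ≤ (X * p).coeff m) ↔ ∀ m, 0 ≤ p.coeff m := by
  refine ⟨fun hp m ↦ coeff_X_mul p m ▸ hp (m + 1), fun hp m ↦ ?_⟩
  cases m with
  | zero => simp
  | succ m => simpa only [coeff_X_mul] using hp m

theorem X_mul_divX_of_coeff_zero_eq_zero {p : R[X]} (hp : p.coeff 0 = 0) : X * p.divX = p := by
  simpa [hp] using X_mul_divX_add p

theorem isNonnegSolution_iff_of_move_X [Preorder R] {h h' f g : ι → R[X]}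
    (hmove : ∀ i, (f i = g i ∧ h i = X * h' i) ∨ (f i = X * g i ∧ h' i = h i)) :
    IsNonnegSolution h f ↔ IsNonnegSolution h' g := by
  have hne (i) : f i ≠ 0 ↔ g i ≠ 0 := by
    rcases hmove i with ⟨hf, -⟩ | ⟨hf, -⟩
    · rw [hf]
    · rw [hf, ne_eq, isRegular_X.left.mul_left_eq_zero_iff]
  have hcoeff (i) : (∀ m, 0 ≤ (f i).coeff m) ↔ ∀ m, 0 ≤ (g i).coeff m := by
    rcases hmove i with ⟨hf, -⟩ | ⟨hf, -⟩
    · rw [hf]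
    · rw [hf, coeff_X_mul_nonneg_iff]
  have hsum : ∑ i, f i * h i = X * ∑ i, g i * h' i := by
    rw [Finset.mul_sum]
    refine Finset.sum_congr rfl fun i _ ↦ ?_
    rcases hmove i with ⟨hf, hh⟩ | ⟨hf, hh⟩
    · rw [hf, hh, mul_left_comm]
    · rw [hf, hh, mul_assoc]
  rw [IsNonnegSolution, IsNonnegSolution, forall_congr' hne, forall_congr' hcoeff, hsum,
    isRegular_X.left.mul_left_eq_zero_iff]

end Semiring

theorem coeff_zero_eq_zero_of_sum_mul_eq_zero [CommSemiring R] [PartialOrder R] [IsOrderedRing R]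
    [NoZeroDivisors R] {f h : ι → R[X]} (hf : ∀ i, 0 ≤ (f i).coeff 0) (hh : ∀ i, 0 ≤ (h i).coeff 0)
    (hsum : ∑ i, f i * h i = 0) {i : ι} (hi : (h i).coeff 0 ≠ 0) : (f i).coeff 0 = 0 := by
  have hsum0 : ∑ j, (f j).coeff 0 * (h j).coeff 0 = 0 := by
    simpa only [finsetSum_coeff, mul_coeff_zero, coeff_zero] using congrArg (coeff · 0) hsum
  have hterm := (Finset.sum_eq_zero_iff_of_nonneg fun j _ ↦ mul_nonneg (hf j) (hh j)).mp hsum0 i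
    (Finset.mem_univ i)
  exact (mul_eq_zero.mp hterm).resolve_right hi

end Polynomial

theorem stmt8_general (n k : ℕ)
    (h h' : Fin n → Polynomial ℤ)
    (hposk : ∀ i : Fin n, k ≤ (i : ℕ) → 0 < (h i).eval 0)
    (hdiv : ∀ i : Fin n, (i : ℕ) < k → h i = X * h' i)
    (heq : ∀ i : Fin n, k ≤ (i : ℕ) → h' i = h i) :
    (∃ f : Fin n → Polynomial ℤ,
      (∀ i, f i ≠ 0) ∧ (∀ i, ∀ m : ℕ, 0 ≤ (f i).coeff m) ∧ ∑ i, f i * h i = 0) ↔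
    (∃ f : Fin n → Polynomial ℤ,
      (∀ i, f i ≠ 0) ∧ (∀ i, ∀ m : ℕ, 0 ≤ (f i).coeff m) ∧ ∑ i, f i * h' i = 0) := by
  have hpos (i : Fin n) (hi : k ≤ i) : 0 < (h i).coeff 0 :=
    coeff_zero_eq_eval_zero (h i) ▸ hposk i hi
  have hh (i : Fin n) : 0 ≤ (h i).coeff 0 := by
    by_cases hi : (i : ℕ) < k
    · rw [hdiv i hi, coeff_X_mul_zero]
    · exact (hpos i (not_lt.mp hi)).le
  refine ⟨fun ⟨f, hf⟩ ↦ ⟨fun i ↦ if (i : ℕ) < k then f i else (f i).divX, ?_⟩,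
    fun ⟨g, hg⟩ ↦ ⟨fun i ↦ if (i : ℕ) < k then g i else X * g i, ?_⟩⟩
  · have hf0 (i : Fin n) (hi : k ≤ i) : (f i).coeff 0 = 0 :=
      coeff_zero_eq_zero_of_sum_mul_eq_zero (fun j ↦ hf.2.1 j 0) hh hf.2.2 (hpos i hi).ne'
    refine (isNonnegSolution_iff_of_move_X fun i ↦ ?_).mp hf
    by_cases hi : (i : ℕ) < k
    · exact .inl ⟨(if_pos hi).symm, hdiv i hi⟩
    · rw [if_neg hi, X_mul_divX_of_coeff_zero_eq_zero (hf0 i (not_lt.mp hi))]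
      exact .inr ⟨rfl, heq i (not_lt.mp hi)⟩
  · refine (isNonnegSolution_iff_of_move_X fun i ↦ ?_).mpr hg
    by_cases hi : (i : ℕ) < k
    · exact .inl ⟨if_pos hi, hdiv i hi⟩
    · exact .inr ⟨if_neg hi, heq i (not_lt.mp hi)⟩

theorem stmt8 (n k : ℕ) (hk1 : 1 ≤ k) (hkn : k < n)
    (h h' : Fin n → Polynomial ℤ)
    (hzero : ∀ i : Fin n, (i : ℕ) < k → (h i).eval 0 = 0)
    (hposk : ∀ i : Fin n, k ≤ (i : ℕ) → 0 < (h i).eval 0)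
    (hdiv : ∀ i : Fin n, (i : ℕ) < k → h i = X * h' i)
    (heq : ∀ i : Fin n, k ≤ (i : ℕ) → h' i = h i) :
    (∃ f : Fin n → Polynomial ℤ,
      (∀ i, f i ≠ 0) ∧ (∀ i, ∀ m : ℕ, 0 ≤ (f i).coeff m) ∧ ∑ i, f i * h i = 0) ↔
    (∃ f : Fin n → Polynomial ℤ,
      (∀ i, f i ≠ 0) ∧ (∀ i, ∀ m : ℕ, 0 ≤ (f i).coeff m) ∧ ∑ i, f i * h' i = 0) :=
  stmt8_general n k h h' hposk hdiv heq
end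

section
/- Every archimedean semiordering of a field of characteristic zero is an ordering. -/
/-!
Nonnegative rational multiples of nonnegative elements are nonnegative (`n • x` scaled by the
square `(1/d)²`), so `ℚ ⊆ F` carries its usual order and, by the archimedean property, every
`x ≥ 0` lies within `ε` above a rational `q ≥ 0`. The axiom `0 ≤ a → 0 ≤ a b²` also yields a
substitute for the continuity of squaring: `|u| ≤ ε → u² ≤ 2ε²`. Writing `a = q + x`, `b = r + y`
with such approximations, `4ab = 4qr + 4qy + 4rx + (x + y)² - (x - y)² ≥ -2ε²`. Finally a positive
`c` dominates a positive rational, because `c (c⁻¹ - N)² ≥ 0` with `c⁻¹ ≤ N` gives `N² c ≥ N`;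
hence `ab` cannot be negative.
-/

namespace Semiordering

variable {F : Type*} [Field F] [LinearOrder F] [IsOrderedAddMonoid F]

theorem ratCast_mul_nonneg [CharZero F] (mul_sq_nonneg : ∀ a b : F, 0 ≤ a → 0 ≤ a * b ^ 2)
    {q : ℚ} (hq : 0 ≤ q) {x : F} (hx : 0 ≤ x) : 0 ≤ (q : F) * x := by
  obtain ⟨m, hm⟩ := Int.eq_ofNat_of_zero_le (Rat.num_nonneg.2 hq)
  have hden : (q.den : F) ≠ 0 := Nat.cast_ne_zero.2 q.den_nz
  calc 0 ≤ ((m * q.den) • x) * ((q.den : F)⁻¹) ^ 2 := mul_sq_nonneg _ _ (nsmul_nonneg hx _)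
    _ = q * x := by rw [Rat.cast_def, hm, nsmul_eq_mul]; push_cast; field_simp

theorem ratCast_le_ratCast [CharZero F] [ZeroLEOneClass F]
    (mul_sq_nonneg : ∀ a b : F, 0 ≤ a → 0 ≤ a * b ^ 2) {q r : ℚ} : (q : F) ≤ r ↔ q ≤ r := by
  have cast_sub_nonneg {q r : ℚ} (h : q ≤ r) : 0 ≤ (r : F) - q := by
    simpa using ratCast_mul_nonneg mul_sq_nonneg (sub_nonneg.2 h) zero_le_one
  refine ⟨fun h ↦ ?_, fun h ↦ sub_nonneg.1 (cast_sub_nonneg h)⟩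
  by_contra! hrq
  exact hrq.ne (Rat.cast_injective (le_antisymm (sub_nonneg.1 (cast_sub_nonneg hrq.le)) h))

theorem ratCast_nonneg [CharZero F] [ZeroLEOneClass F]
    (mul_sq_nonneg : ∀ a b : F, 0 ≤ a → 0 ≤ a * b ^ 2) {q : ℚ} : 0 ≤ (q : F) ↔ 0 ≤ q := by
  simpa using ratCast_le_ratCast mul_sq_nonneg (q := 0) (r := q)

theorem exists_pos_ratCast_le [CharZero F] [ZeroLEOneClass F]
    (mul_sq_nonneg : ∀ a b : F, 0 ≤ a → 0 ≤ a * b ^ 2) (harch : ∀ a : F, ∃ n : ℕ, a ≤ n)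
    {c : F} (hc : 0 < c) : ∃ q : ℚ, 0 < q ∧ (q : F) ≤ c := by
  obtain ⟨N, hN⟩ := harch c⁻¹
  set M : ℕ := N + 1
  have hM : c⁻¹ ≤ M := hN.trans (by simp [M])
  have h1 : 0 ≤ (M : F) ^ 2 * c - M :=
    (add_nonneg (mul_sq_nonneg c (c⁻¹ - M) hc.le) (sub_nonneg.2 hM)).trans_eq
      (by field_simp [hc.ne']; ring)
  have h2 := ratCast_mul_nonneg mul_sq_nonneg (q := 1 / M ^ 2) (by positivity) h1
  refine ⟨1 / M, by positivity, sub_nonneg.1 (h2.trans_eq ?_)⟩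
  have : (M : F) ≠ 0 := Nat.cast_ne_zero.2 N.succ_ne_zero
  push_cast; field_simp

theorem exists_ratCast_le_le_add [CharZero F] [ZeroLEOneClass F]
    (mul_sq_nonneg : ∀ a b : F, 0 ≤ a → 0 ≤ a * b ^ 2) (harch : ∀ a : F, ∃ n : ℕ, a ≤ n)
    {x : F} (hx : 0 ≤ x) {ε : ℚ} (hε : 0 < ε) :
    ∃ q : ℚ, 0 ≤ q ∧ (q : F) ≤ x ∧ x ≤ ((q + ε : ℚ) : F) := by
  classical
  have hex : ∃ n : ℕ, x ≤ (((n + 1) * ε : ℚ) : F) := by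
    obtain ⟨N, hN⟩ := harch x
    obtain ⟨n, hn⟩ := exists_nat_ge ((N : ℚ) / ε)
    refine ⟨n, hN.trans ?_⟩
    rw [← Rat.cast_natCast, ratCast_le_ratCast mul_sq_nonneg]
    exact ((div_le_iff₀ hε).1 hn).trans (by nlinarith)
  refine ⟨Nat.find hex * ε, by positivity, ?_, by simpa [add_mul] using Nat.find_spec hex⟩
  rcases h : Nat.find hex with _ | k
  · simpa using hx
  · have := Nat.find_min hex (show k < Nat.find hex by omega)
    exact_mod_cast (not_le.1 this).le

theorem sq_le_two_mul_sq_of_abs_le [CharZero F] [ZeroLEOneClass F]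
    (mul_sq_nonneg : ∀ a b : F, 0 ≤ a → 0 ≤ a * b ^ 2) {ε : ℚ} (hε : 0 < ε) {u : F}
    (hu : |u| ≤ ε) : u ^ 2 ≤ ((2 * ε ^ 2 : ℚ) : F) := by
  by_contra! h
  have hu0 : u ≠ 0 := by
    rintro rfl
    rw [zero_pow two_ne_zero] at h
    exact h.not_ge ((ratCast_nonneg mul_sq_nonneg).2 (by positivity))
  have hε0 : (ε : F) ≠ 0 := Rat.cast_ne_zero.2 hε.ne'
  obtain ⟨hu₁, hu₂⟩ := abs_le.1 hu
  -- `(ε - u)(u⁻¹ + ε⁻¹)² + (ε + u)(u⁻¹ - ε⁻¹)² = 2εu⁻² - 2ε⁻¹`, but `u² > 2ε²` gives `2εu⁻² < ε⁻¹`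
  have h₁ : 0 ≤ 1 - 2 * ε ^ 2 * (u⁻¹) ^ 2 :=
    (mul_sq_nonneg _ u⁻¹ (sub_nonneg.2 h.le)).trans_eq (by push_cast; field_simp)
  have h₂ : 0 ≤ (ε - u) * (u⁻¹ + ε⁻¹) ^ 2 + (ε + u) * (u⁻¹ - ε⁻¹) ^ 2 :=
    add_nonneg (mul_sq_nonneg _ _ (sub_nonneg.2 hu₂))
      (mul_sq_nonneg _ _ (neg_le_iff_add_nonneg'.1 hu₁))
  have h₃ : 0 ≤ ((-(1 / ε) : ℚ) : F) :=
    (add_nonneg (ratCast_mul_nonneg mul_sq_nonneg (q := 1 / ε) (by positivity) h₁) h₂).trans_eq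
      (by push_cast; field_simp; ring)
  have : 0 < 1 / ε := by positivity
  linarith [(ratCast_nonneg mul_sq_nonneg).1 h₃]

theorem neg_sq_div_two_le_mul [CharZero F] [ZeroLEOneClass F]
    (mul_sq_nonneg : ∀ a b : F, 0 ≤ a → 0 ≤ a * b ^ 2) (harch : ∀ a : F, ∃ n : ℕ, a ≤ n)
    {a b : F} (ha : 0 ≤ a) (hb : 0 ≤ b) {ε : ℚ} (hε : 0 < ε) :
    -((ε ^ 2 / 2 : ℚ) : F) ≤ a * b := by
  obtain ⟨q, hq, hqa, haq⟩ := exists_ratCast_le_le_add mul_sq_nonneg harch ha hε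
  obtain ⟨r, hr, hrb, hbr⟩ := exists_ratCast_le_le_add mul_sq_nonneg harch hb hε
  set x := a - q
  set y := b - r
  have hx : 0 ≤ x := sub_nonneg.2 hqa
  have hy : 0 ≤ y := sub_nonneg.2 hrb
  have hxε : x ≤ ε := sub_le_iff_le_add'.2 (by exact_mod_cast haq)
  have hyε : y ≤ ε := sub_le_iff_le_add'.2 (by exact_mod_cast hbr)
  have hsum : 0 ≤ ((4 * q * r : ℚ) : F) + ((4 * q : ℚ) : F) * y + ((4 * r : ℚ) : F) * x
      + (x + y) ^ 2 + (((2 * ε ^ 2 : ℚ) : F) - (x - y) ^ 2) := by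
    refine add_nonneg (add_nonneg (add_nonneg (add_nonneg ?_ ?_) ?_) ?_) ?_
    · exact (ratCast_nonneg mul_sq_nonneg).2 (by positivity)
    · exact ratCast_mul_nonneg mul_sq_nonneg (by positivity) hy
    · exact ratCast_mul_nonneg mul_sq_nonneg (by positivity) hx
    · simpa using mul_sq_nonneg 1 (x + y) zero_le_one
    · exact sub_nonneg.2 (sq_le_two_mul_sq_of_abs_le mul_sq_nonneg hε
        (abs_sub_le_of_nonneg_of_le hx hxε hy hyε))
  refine neg_le_iff_add_nonneg.2 ((ratCast_mul_nonneg mul_sq_nonneg (q := 1 / 4)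
    (by norm_num) hsum).trans_eq ?_)
  simp only [x, y]
  push_cast
  ring

theorem mul_nonneg_of_archimedean [CharZero F] [ZeroLEOneClass F]
    (mul_sq_nonneg : ∀ a b : F, 0 ≤ a → 0 ≤ a * b ^ 2) (harch : ∀ a : F, ∃ n : ℕ, a ≤ n)
    {a b : F} (ha : 0 ≤ a) (hb : 0 ≤ b) : 0 ≤ a * b := by
  by_contra! hab
  obtain ⟨q, hq, hqab⟩ := exists_pos_ratCast_le mul_sq_nonneg harch (neg_pos.2 hab)
  set ε := min q 1
  have hε : 0 < ε := lt_min hq one_pos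
  have hqε : q ≤ ε ^ 2 / 2 := (ratCast_le_ratCast mul_sq_nonneg).1
    (hqab.trans (neg_le.1 (neg_sq_div_two_le_mul mul_sq_nonneg harch ha hb hε)))
  nlinarith [min_le_left q 1, min_le_right q 1]

end Semiordering

/-- Every archimedean semiordering of a field of characteristic zero is an ordering. -/
theorem stmt10 (F : Type*) [Field F] [CharZero F] (le : F → F → Prop)
    (hrefl : ∀ a, le a a)
    (htrans : ∀ a b c, le a b → le b c → le a c)
    (hantisymm : ∀ a b, le a b → le b a → a = b)
    (htotal : ∀ a b, le a b ∨ le b a)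
    (hadd : ∀ a b c, le a b → le (a + c) (b + c))
    (hone : le 0 1)
    (hsq : ∀ a b, le 0 a → le 0 (a * b ^ 2))
    (harch : ∀ a : F, ∃ n : ℕ, le a (n : F)) :
    ∀ a b, le 0 a → le 0 b → le 0 (a * b) := by
  let _ : LinearOrder F :=
    { le, le_refl := hrefl, le_trans := htrans, le_antisymm := hantisymm, le_total := htotal,
      toDecidableLE := Classical.decRel le }
  have : IsOrderedAddMonoid F := { add_le_add_left := fun a b h c ↦ hadd a b c h }
  have : ZeroLEOneClass F := ⟨hone⟩
  exact fun a b ↦ Semiordering.mul_nonneg_of_archimedean hsq harch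
end

section
/- A field admits a semiordering if and only if it is formally real (admits a field ordering). -/
/-!
Under a semiordering every sum of squares is nonnegative, so `-1` is not a sum of squares.
Conversely (Artin–Schreier), if `-1` is not a sum of squares then the sums of squares form a
preordering; by Zorn it lies in a maximal one `P`, which is total because for `-a ∉ P` the set
`P + aP` is again a preordering. In a field a total preordering is the positive cone of an
ordering, and an ordering is a semiordering because squares are nonnegative.
-/

namespace RingPreordering

theorem bddAbove_of_isChain {R : Type*} [CommRing R] {c : Set (RingPreordering R)}
    (hc : IsChain (· ≤ ·) c) (hne : c.Nonempty) : BddAbove c := by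
  set S := toSubsemiring '' c
  have hSne : S.Nonempty := hne.image _
  have hS : DirectedOn (· ≤ ·) S :=
    (hc.image_of_map_rel _ _ toSubsemiring fun _ _ h => h).directedOn
  obtain ⟨P₀, hP₀⟩ := hne
  refine ⟨{ toSubsemiring := sSup S
            mem_of_isSquare' := fun hx =>
              le_sSup (Set.mem_image_of_mem toSubsemiring hP₀) (P₀.mem_of_isSquare hx)
            neg_one_notMem' := ?_ },
    fun P hP x hx => le_sSup (Set.mem_image_of_mem toSubsemiring hP) hx⟩
  change -1 ∉ sSup S
  rw [Subsemiring.mem_sSup_of_directedOn hSne hS]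
  rintro ⟨_, ⟨P, -, rfl⟩, hP⟩
  exact P.neg_one_notMem hP

variable {F : Type*} [Field F]

def adjoin (P : RingPreordering F) (a : F) (ha : -a ∉ P) : RingPreordering F :=
  mk' {x | ∃ p ∈ P, ∃ q ∈ P, x = p + a * q}
    (by
      rintro _ _ ⟨p, hp, q, hq, rfl⟩ ⟨p', hp', q', hq', rfl⟩
      exact ⟨p + p', add_mem hp hp', q + q', add_mem hq hq', by ring⟩)
    (by
      rintro _ _ ⟨p, hp, q, hq, rfl⟩ ⟨p', hp', q', hq', rfl⟩
      refine ⟨p * p' + a ^ 2 * (q * q'), ?_, p * q' + q * p', ?_, by ring⟩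
      · exact add_mem (mul_mem hp hp') (mul_mem (P.pow_two_mem a) (mul_mem hq hq'))
      · exact add_mem (mul_mem hp hq') (mul_mem hq hp'))
    (fun x => ⟨x * x, P.mul_self_mem x, 0, zero_mem P, by ring⟩)
    (by
      rintro ⟨p, hp, q, hq, h⟩
      rcases eq_or_ne q 0 with rfl | hq0
      · rw [mul_zero, add_zero] at h
        exact P.neg_one_notMem (h ▸ hp)
      · refine ha ?_
        have : -a = (1 + p) * q * q⁻¹ ^ 2 := by
          field_simp
          linear_combination h
        rw [this]
        exact mul_mem (mul_mem (add_mem (one_mem P) hp) hq) (P.pow_two_mem _))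

theorem le_adjoin (P : RingPreordering F) {a : F} (ha : -a ∉ P) : P ≤ P.adjoin a ha :=
  fun p hp => ⟨p, hp, 0, zero_mem P, by ring⟩

theorem mem_adjoin_self (P : RingPreordering F) {a : F} (ha : -a ∉ P) : a ∈ P.adjoin a ha :=
  ⟨0, zero_mem P, 1, one_mem P, by ring⟩

theorem hasMemOrNegMem_of_isMax {P : RingPreordering F} (hP : IsMax P) : HasMemOrNegMem P where
  mem_or_neg_mem _ := or_iff_not_imp_right.mpr fun ha =>
    hP (P.le_adjoin ha) (P.mem_adjoin_self ha)

theorem exists_hasMemOrNegMem_of_not_isSumSq_neg_one (h : ¬ IsSumSq (-1 : F)) :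
    ∃ P : RingPreordering F, HasMemOrNegMem P := by
  have : Nonempty (RingPreordering F) :=
    ⟨mk' {x | IsSumSq x} IsSumSq.add IsSumSq.mul IsSumSq.mul_self h⟩
  obtain ⟨P, hP⟩ := zorn_le_nonempty (α := RingPreordering F) fun _ => bddAbove_of_isChain
  exact ⟨P, hasMemOrNegMem_of_isMax hP⟩

def toRingCone (P : RingPreordering F) : RingCone F where
  __ := P.toSubsemiring
  eq_zero_of_mem_of_neg_mem' := RingPreordering.eq_zero_of_mem_of_neg_mem

end RingPreordering

theorem exists_linearOrder_isOrderedRing_of_not_isSumSq_neg_one {F : Type*} [Field F]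
    (h : ¬ IsSumSq (-1 : F)) : ∃ _ : LinearOrder F, IsOrderedRing F := by
  classical
  obtain ⟨P, hP⟩ := RingPreordering.exists_hasMemOrNegMem_of_not_isSumSq_neg_one h
  have : HasMemOrNegMem P.toRingCone := ⟨hP.mem_or_neg_mem⟩
  let _ := LinearOrder.mkOfAddGroupCone P.toRingCone
  exact ⟨_, IsOrderedRing.mkOfCone P.toRingCone⟩

section Relation

variable {F : Type*} [Field F] {le : F → F → Prop}

theorem not_isSumSq_neg_one_of_semiordering (hrefl : ∀ a, le a a)
    (htrans : ∀ a b c, le a b → le b c → le a c) (hanti : ∀ a b, le a b → le b a → a = b)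
    (hadd : ∀ a b c, le a b → le (a + c) (b + c)) (h01 : le 0 1)
    (hmul_sq : ∀ a b, le 0 a → le 0 (a * b ^ 2)) : ¬ IsSumSq (-1 : F) := by
  have hsumSq : ∀ x : F, IsSumSq x → le 0 x := by
    intro x hx
    induction hx with
    | zero => exact hrefl 0
    | @sq_add a s _ ih =>
      have hsq : le 0 (a * a) := by simpa [sq] using hmul_sq 1 a h01
      exact htrans _ _ _ hsq (by simpa [add_comm] using hadd 0 s (a * a) ih)
  intro h
  exact one_ne_zero (hanti 1 0 (by simpa using hadd 0 (-1) 1 (hsumSq _ h)) h01)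

theorem sq_nonneg_of_ordering (htot : ∀ a b, le a b ∨ le b a)
    (hadd : ∀ a b c, le a b → le (a + c) (b + c))
    (hmul : ∀ a b, le 0 a → le 0 b → le 0 (a * b)) (b : F) : le 0 (b ^ 2) := by
  rcases htot 0 b with hb | hb
  · simpa [sq] using hmul b b hb hb
  · have hnb : le 0 (-b) := by simpa using hadd b 0 (-b) hb
    simpa [sq] using hmul (-b) (-b) hnb hnb

end Relation

/-- A field admits a semiordering if and only if it is formally real
(admits a field ordering). -/
theorem stmt11 (F : Type*) [Field F] :
    (∃ le : F → F → Prop,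
      (∀ a, le a a) ∧
      (∀ a b c, le a b → le b c → le a c) ∧
      (∀ a b, le a b → le b a → a = b) ∧
      (∀ a b, le a b ∨ le b a) ∧
      (∀ a b c, le a b → le (a + c) (b + c)) ∧
      le 0 1 ∧
      (∀ a b, le 0 a → le 0 (a * b ^ 2))) ↔
    (∃ le : F → F → Prop,
      (∀ a, le a a) ∧
      (∀ a b c, le a b → le b c → le a c) ∧
      (∀ a b, le a b → le b a → a = b) ∧
      (∀ a b, le a b ∨ le b a) ∧
      (∀ a b c, le a b → le (a + c) (b + c)) ∧
      (∀ a b, le 0 a → le 0 b → le 0 (a * b))) := by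
  constructor
  · rintro ⟨le, hrefl, htrans, hanti, -, hadd, h01, hmul_sq⟩
    obtain ⟨_, _⟩ := exists_linearOrder_isOrderedRing_of_not_isSumSq_neg_one
      (not_isSumSq_neg_one_of_semiordering hrefl htrans hanti hadd h01 hmul_sq)
    exact ⟨(· ≤ ·), le_refl, fun _ _ _ => le_trans, fun _ _ => le_antisymm, le_total,
      fun _ _ c h => add_le_add_left h c, fun _ _ => mul_nonneg⟩
  · rintro ⟨le, hrefl, htrans, hanti, htot, hadd, hmul⟩
    have hsq := sq_nonneg_of_ordering htot hadd hmul
    exact ⟨le, hrefl, htrans, hanti, htot, hadd, by simpa using hsq 1,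
      fun a b ha => hmul a (b ^ 2) ha (hsq b)⟩
end

section
/- Every pre-semicone P₀ of a formally real field F can be extended to a set P ⊇ P₀ such that P or -P is a semicone of F. -/
/-!
A pre-semicone which is maximal for inclusion (Zorn) is total. Indeed, if `-a ∉ P` then
`P + ΣF²·a` is still a pre-semicone: a relation `p + s a = -(q + t a)` with `s + t ≠ 0`
would put `-a = ((s + t)⁻¹)² (s + t)(p + q)` in `P`, while `s + t = 0` forces `s = t = 0`
because `F` is formally real. So maximality gives `a ∈ P`. A total pre-semicone contains
`1` or `-1`, hence it or its negative is a semicone.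
-/

theorem IsFormallyReal.of_le {R : Type*} [Ring R] [NoZeroDivisors R] (le : R → R → Prop)
    (le_refl : ∀ a, le a a) (le_trans : ∀ a b c, le a b → le b c → le a c)
    (le_antisymm : ∀ a b, le a b → le b a → a = b) (le_total : ∀ a b, le a b ∨ le b a)
    (add_le_add_right : ∀ a b c, le a b → le (a + c) (b + c))
    (mul_nonneg : ∀ a b, le 0 a → le 0 b → le 0 (a * b)) : IsFormallyReal R := by
  have le_add_of_nonneg (a s : R) (hs : le 0 s) : le a (s + a) := by
    simpa using add_le_add_right 0 s a hs
  have mul_self_nonneg (a : R) : le 0 (a * a) := by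
    rcases le_total 0 a with ha | ha
    · exact mul_nonneg a a ha ha
    · have hna : le 0 (-a) := by simpa using add_le_add_right a 0 (-a) ha
      simpa using mul_nonneg (-a) (-a) hna hna
  have isSumSq_nonneg {s : R} (hs : IsSumSq s) : le 0 s := by
    induction hs with
    | zero => exact le_refl 0
    | @sq_add a t _ ih => exact le_trans _ _ _ ih (le_add_of_nonneg t _ (mul_self_nonneg a))
  refine IsFormallyReal.of_eq_zero_of_eq_zero_of_mul_self_add fun {s a} hs h ↦ ?_
  have hle : le (a * a) (s + a * a) := le_add_of_nonneg (a * a) s (isSumSq_nonneg hs)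
  rw [add_comm, h] at hle
  exact mul_self_eq_zero.mp (le_antisymm _ _ hle (mul_self_nonneg a))

section Semicone

variable {R : Type*} [Ring R]

structure IsPreSemicone (P : Set R) : Prop where
  add_mem : ∀ a ∈ P, ∀ b ∈ P, a + b ∈ P
  sq_mul_mem : ∀ a ∈ P, ∀ b : R, b ^ 2 * a ∈ P
  inter_neg_eq : P ∩ -P = {0}

structure IsSemicone (P : Set R) : Prop extends IsPreSemicone P where
  one_mem : (1 : R) ∈ P
  union_neg_eq : P ∪ -P = Set.univ

namespace IsPreSemicone

variable {P : Set R}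

theorem zero_mem (hP : IsPreSemicone P) : (0 : R) ∈ P :=
  (hP.inter_neg_eq.symm.subset rfl).1

theorem eq_zero_of_mem_of_neg_mem (hP : IsPreSemicone P) {a : R} (ha : a ∈ P) (hna : -a ∈ P) :
    a = 0 :=
  hP.inter_neg_eq.subset ⟨ha, hna⟩

theorem of_eq_zero_of_mem_of_neg_mem (add_mem : ∀ a ∈ P, ∀ b ∈ P, a + b ∈ P)
    (sq_mul_mem : ∀ a ∈ P, ∀ b : R, b ^ 2 * a ∈ P) (zero_mem : (0 : R) ∈ P)
    (eq_zero : ∀ a ∈ P, -a ∈ P → a = 0) : IsPreSemicone P := by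
  refine ⟨add_mem, sq_mul_mem, Set.Subset.antisymm (fun a ha ↦ eq_zero a ha.1 ha.2) ?_⟩
  rintro _ rfl
  exact ⟨zero_mem, by simpa using zero_mem⟩

theorem isSumSq_mul_mem (hP : IsPreSemicone P) {s a : R} (hs : IsSumSq s) (ha : a ∈ P) :
    s * a ∈ P := by
  induction hs with
  | zero => simpa using hP.zero_mem
  | sq_add b _ ih => simpa [add_mul, sq] using hP.add_mem _ (hP.sq_mul_mem a ha b) _ ih

theorem neg (hP : IsPreSemicone P) : IsPreSemicone (-P) := by
  refine ⟨fun a ha b hb ↦ ?_, fun a ha b ↦ ?_, ?_⟩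
  · simpa [add_comm] using hP.add_mem _ ha _ hb
  · simpa using hP.sq_mul_mem _ ha b
  · rw [neg_neg, Set.inter_comm, hP.inter_neg_eq]

theorem sUnion {c : Set (Set R)} (hc : ∀ P ∈ c, IsPreSemicone P)
    (hchain : IsChain (· ⊆ ·) c) (hne : c.Nonempty) : IsPreSemicone (⋃₀ c) := by
  refine of_eq_zero_of_mem_of_neg_mem ?_ ?_ ?_ ?_
  · rintro a ⟨Pa, hPa, ha⟩ b ⟨Pb, hPb, hb⟩
    rcases hchain.total hPa hPb with h | h
    · exact ⟨Pb, hPb, (hc Pb hPb).add_mem a (h ha) b hb⟩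
    · exact ⟨Pa, hPa, (hc Pa hPa).add_mem a ha b (h hb)⟩
  · rintro a ⟨Pa, hPa, ha⟩ b
    exact ⟨Pa, hPa, (hc Pa hPa).sq_mul_mem a ha b⟩
  · obtain ⟨P, hP⟩ := hne
    exact ⟨P, hP, (hc P hP).zero_mem⟩
  · rintro a ⟨Pa, hPa, ha⟩ ⟨Pb, hPb, hb⟩
    rcases hchain.total hPa hPb with h | h
    · exact (hc Pb hPb).eq_zero_of_mem_of_neg_mem (h ha) hb
    · exact (hc Pa hPa).eq_zero_of_mem_of_neg_mem ha (h hb)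

theorem exists_maximal_superset (hP : IsPreSemicone P) :
    ∃ Q, P ⊆ Q ∧ Maximal IsPreSemicone Q :=
  zorn_subset_nonempty {Q | IsPreSemicone Q} (fun c hc hchain hne ↦
    ⟨⋃₀ c, sUnion hc hchain hne, fun _ ↦ Set.subset_sUnion_of_mem⟩) P hP

theorem isSemicone_or_isSemicone_neg (hP : IsPreSemicone P) (htotal : ∀ a, a ∈ P ∨ -a ∈ P) :
    IsSemicone P ∨ IsSemicone (-P) := by
  have hunion : P ∪ -P = Set.univ := Set.eq_univ_of_forall htotal
  rcases htotal 1 with h1 | h1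
  · exact Or.inl ⟨hP, h1, hunion⟩
  · exact Or.inr ⟨hP.neg, h1, by rw [neg_neg, Set.union_comm, hunion]⟩

end IsPreSemicone

def addSumSqMul (P : Set R) (a : R) : Set R :=
  {x | ∃ p ∈ P, ∃ s, IsSumSq s ∧ x = p + s * a}

theorem subset_addSumSqMul (P : Set R) (a : R) : P ⊆ addSumSqMul P a :=
  fun p hp ↦ ⟨p, hp, 0, .zero, by simp⟩

theorem mem_addSumSqMul {P : Set R} (hP : IsPreSemicone P) (a : R) : a ∈ addSumSqMul P a :=
  ⟨0, hP.zero_mem, 1, .one, by simp⟩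

end Semicone

section FormallyReal

variable {F : Type*} [Field F] {P : Set F}

theorem IsPreSemicone.neg_mem_of_add_mul_eq_zero (hP : IsPreSemicone P) {p s a : F} (hp : p ∈ P)
    (hs : IsSumSq s) (hs0 : s ≠ 0) (h : p + s * a = 0) : -a ∈ P := by
  have : -a = s⁻¹ ^ 2 * (s * p) := by
    field_simp
    linear_combination -h
  rw [this]
  exact hP.sq_mul_mem _ (hP.isSumSq_mul_mem hs hp) _

theorem IsPreSemicone.addSumSqMul [IsFormallyReal F] (hP : IsPreSemicone P) {a : F}
    (ha : -a ∉ P) : IsPreSemicone (addSumSqMul P a) := by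
  refine of_eq_zero_of_mem_of_neg_mem ?_ ?_ (subset_addSumSqMul P a hP.zero_mem) ?_
  · rintro _ ⟨p, hp, s, hs, rfl⟩ _ ⟨q, hq, t, ht, rfl⟩
    exact ⟨p + q, hP.add_mem p hp q hq, s + t, hs.add ht, by ring⟩
  · rintro _ ⟨p, hp, s, hs, rfl⟩ b
    have hbs : IsSumSq (b ^ 2 * s) := by simpa [sq] using (IsSumSq.mul_self b).mul hs
    exact ⟨b ^ 2 * p, hP.sq_mul_mem p hp b, b ^ 2 * s, hbs, by ring⟩
  · rintro _ ⟨p, hp, s, hs, rfl⟩ ⟨q, hq, t, ht, hx⟩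
    have hsum : (p + q) + (s + t) * a = 0 := by linear_combination -hx
    by_cases hst : s + t = 0
    · have hs0 : s = 0 := IsFormallyReal.eq_zero_of_add_right hs ht hst
      have hq_eq : q = -p := by linear_combination hsum - a * hst
      have hp0 : p = 0 := hP.eq_zero_of_mem_of_neg_mem hp (hq_eq ▸ hq)
      simp [hp0, hs0]
    · exact absurd (hP.neg_mem_of_add_mul_eq_zero (hP.add_mem p hp q hq) (hs.add ht) hst hsum) ha

theorem Maximal.mem_or_neg_mem_of_isPreSemicone [IsFormallyReal F]
    (hmax : Maximal IsPreSemicone P) (a : F) : a ∈ P ∨ -a ∈ P := by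
  by_cases ha : -a ∈ P
  · exact Or.inr ha
  · exact Or.inl <| hmax.2 (hmax.1.addSumSqMul ha) (subset_addSumSqMul P a)
      (mem_addSumSqMul hmax.1 a)

end FormallyReal

/-- Every pre-semicone of a formally real field extends to a set `P` such that
`P` or `-P` is a semicone. -/
theorem stmt12 (F : Type*) [Field F]
    (hreal : ∃ le : F → F → Prop,
      (∀ a, le a a) ∧
      (∀ a b c, le a b → le b c → le a c) ∧
      (∀ a b, le a b → le b a → a = b) ∧
      (∀ a b, le a b ∨ le b a) ∧
      (∀ a b c, le a b → le (a + c) (b + c)) ∧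
      (∀ a b, le 0 a → le 0 b → le 0 (a * b)))
    (P₀ : Set F)
    (hadd : ∀ a ∈ P₀, ∀ b ∈ P₀, a + b ∈ P₀)
    (hsq : ∀ a ∈ P₀, ∀ b : F, b ^ 2 * a ∈ P₀)
    (hanti : P₀ ∩ (-P₀) = {0}) :
    ∃ P : Set F, P₀ ⊆ P ∧
      ((∀ a ∈ P, ∀ b ∈ P, a + b ∈ P) ∧
        (∀ a ∈ P, ∀ b : F, b ^ 2 * a ∈ P) ∧ (1 : F) ∈ P ∧
        P ∩ (-P) = {0} ∧ P ∪ (-P) = Set.univ ∨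
       (∀ a ∈ -P, ∀ b ∈ -P, a + b ∈ -P) ∧
        (∀ a ∈ -P, ∀ b : F, b ^ 2 * a ∈ -P) ∧ (1 : F) ∈ -P ∧
        (-P) ∩ (-(-P)) = {0} ∧ (-P) ∪ (-(-P)) = Set.univ) := by
  obtain ⟨le, hrefl, htrans, hantisymm, htotal, hadd_le, hmul_nonneg⟩ := hreal
  have : IsFormallyReal F :=
    .of_le le hrefl htrans hantisymm htotal hadd_le hmul_nonneg
  obtain ⟨P, hP₀P, hmax⟩ := IsPreSemicone.exists_maximal_superset ⟨hadd, hsq, hanti⟩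
  refine ⟨P, hP₀P, ?_⟩
  rcases hmax.1.isSemicone_or_isSemicone_neg hmax.mem_or_neg_mem_of_isPreSemicone with h | h
  · exact Or.inl ⟨h.add_mem, h.sq_mul_mem, h.one_mem, h.inter_neg_eq, h.union_neg_eq⟩
  · exact Or.inr ⟨h.add_mem, h.sq_mul_mem, h.one_mem, h.inter_neg_eq, h.union_neg_eq⟩
end

section
/- Let P be a semicone (positive cone of a semiordering) of a field F and F₀ a subfield. Then the set A = {a ∈ F : ∃ b ∈ F₀, a ≤ b and -a ≤ b} is a valuation ring of F (i.e., a subring such that for every nonzero x ∈ F, x ∈ A or x⁻¹ ∈ A). -/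
/-!
Write `a ≤ b` for `b - a ∈ P`. The set `A` of elements bounded by `F₀` is closed under negation
and addition directly. For squares, if `-b ≤ a ≤ b` then `c = b + 1` satisfies
`2c(c² - a²) = (c - a)²(c + a) + (c + a)²(c - a) ≥ 0`, whence `a² ≤ c³`; products then follow
from `4ab = (a + b)² - (a - b)²`, since `A` is stable under division by `4 = 2²`. Finally, for
`x ≥ 0`, either `x ≤ 1`, or `x ≥ 1` and then `1 - x⁻¹ = x⁻²((x - 1)² + (x - 1)) ≥ 0`, so that
`0 ≤ x⁻¹ ≤ 1`.
-/

section

variable {F : Type*} [Field F]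

structure IsSemicone_s13 (P : Set F) : Prop where
  add_mem : ∀ a ∈ P, ∀ b ∈ P, a + b ∈ P
  sq_mul_mem : ∀ a ∈ P, ∀ b : F, b ^ 2 * a ∈ P
  one_mem : (1 : F) ∈ P
  inter_neg : P ∩ (-P) = {0}
  union_neg : P ∪ (-P) = Set.univ

namespace IsSemicone_s13

variable {P : Set F} (hP : IsSemicone_s13 P)
include hP

theorem zero_mem : (0 : F) ∈ P := by
  simpa using hP.sq_mul_mem 1 hP.one_mem 0

theorem sq_mem (c : F) : c ^ 2 ∈ P := by
  simpa using hP.sq_mul_mem 1 hP.one_mem c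

theorem mem_or_neg_mem (x : F) : x ∈ P ∨ -x ∈ P := by
  simpa using hP.union_neg.ge (Set.mem_univ x)

theorem two_ne_zero : (2 : F) ≠ 0 := by
  intro h
  have h_neg_one : (-1 : F) = 1 := by linear_combination -h
  have h_one : (1 : F) ∈ P ∩ (-P) := ⟨hP.one_mem, by simpa [h_neg_one] using hP.one_mem⟩
  rw [hP.inter_neg] at h_one
  exact one_ne_zero h_one

theorem mem_of_sq_mul_mem {c x : F} (hc : c ≠ 0) (h : c ^ 2 * x ∈ P) : x ∈ P := by
  simpa [← mul_assoc, ← mul_pow, hc] using hP.sq_mul_mem _ h c⁻¹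

theorem mem_of_add_self_mem {x : F} (h : x + x ∈ P) : x ∈ P :=
  hP.mem_of_sq_mul_mem hP.two_ne_zero <| by
    convert hP.add_mem _ h _ h using 1
    ring

theorem inv_mem {x : F} (h : x ∈ P) : x⁻¹ ∈ P := by
  rcases eq_or_ne x 0 with rfl | hx
  · simpa using h
  · convert hP.sq_mul_mem _ h x⁻¹ using 1
    field_simp

theorem mul_sub_sq_mem {c a : F} (h_sub : c - a ∈ P) (h_add : c + a ∈ P) :
    c * (c ^ 2 - a ^ 2) ∈ P :=
  hP.mem_of_add_self_mem <| by
    convert hP.add_mem _ (hP.sq_mul_mem _ h_add (c - a)) _ (hP.sq_mul_mem _ h_sub (c + a)) using 1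
    ring

theorem one_sub_inv_mem {x : F} (hx : x ≠ 0) (h : x - 1 ∈ P) : 1 - x⁻¹ ∈ P := by
  have h_sq_sub : x ^ 2 - x ∈ P := by
    convert hP.add_mem _ (hP.sq_mem (x - 1)) _ h using 1
    ring
  convert hP.sq_mul_mem _ h_sq_sub x⁻¹ using 1
  field_simp

end IsSemicone_s13

def boundedBy (P : Set F) (F₀ : Subfield F) : Set F :=
  {a : F | ∃ b ∈ F₀, b - a ∈ P ∧ b + a ∈ P}

namespace boundedBy

variable {P : Set F} {F₀ : Subfield F}

theorem neg_mem {a : F} (ha : a ∈ boundedBy P F₀) : -a ∈ boundedBy P F₀ := by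
  obtain ⟨b, hb, h_sub, h_add⟩ := ha
  exact ⟨b, hb, by rwa [sub_neg_eq_add], by rwa [← sub_eq_add_neg]⟩

theorem add_mem (hadd : ∀ a ∈ P, ∀ b ∈ P, a + b ∈ P) {a a' : F}
    (ha : a ∈ boundedBy P F₀) (ha' : a' ∈ boundedBy P F₀) : a + a' ∈ boundedBy P F₀ := by
  obtain ⟨b, hb, h_sub, h_add⟩ := ha
  obtain ⟨b', hb', h_sub', h_add'⟩ := ha'
  refine ⟨b + b', F₀.add_mem hb hb', ?_, ?_⟩
  · convert hadd _ h_sub _ h_sub' using 1; ring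
  · convert hadd _ h_add _ h_add' using 1; ring

variable (hP : IsSemicone_s13 P)
include hP

theorem mem_of_mem_of_one_sub_mem {x : F} (hx : x ∈ P) (h : 1 - x ∈ P) :
    x ∈ boundedBy P F₀ :=
  ⟨1, F₀.one_mem, h, hP.add_mem _ hP.one_mem _ hx⟩

theorem zero_mem : (0 : F) ∈ boundedBy P F₀ :=
  mem_of_mem_of_one_sub_mem hP hP.zero_mem (by simpa using hP.one_mem)

theorem one_mem : (1 : F) ∈ boundedBy P F₀ :=
  mem_of_mem_of_one_sub_mem hP hP.one_mem (by simpa using hP.zero_mem)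

theorem sq_mem {a : F} (ha : a ∈ boundedBy P F₀) : a ^ 2 ∈ boundedBy P F₀ := by
  obtain ⟨b, hb, h_sub, h_add⟩ := ha
  have hb_pos : b ∈ P := hP.mem_of_add_self_mem <| by
    convert hP.add_mem _ h_sub _ h_add using 1; ring
  have hc_pos : b + 1 ∈ P := hP.add_mem _ hb_pos _ hP.one_mem
  have hc_sq_sub : (b + 1) * ((b + 1) ^ 2 - a ^ 2) ∈ P := hP.mul_sub_sq_mem
    (by convert hP.add_mem _ h_sub _ hP.one_mem using 1; ring)
    (by convert hP.add_mem _ h_add _ hP.one_mem using 1; ring)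
  refine ⟨(b + 1) ^ 3, F₀.pow_mem (F₀.add_mem hb F₀.one_mem) 3, ?_, ?_⟩
  · convert hP.add_mem _ hc_sq_sub _ (hP.sq_mul_mem _ hb_pos a) using 1; ring
  · convert hP.add_mem _ (hP.sq_mul_mem _ hc_pos (b + 1)) _ (hP.sq_mem a) using 1; ring

theorem mem_of_four_mul_mem {z : F} (hz : 4 * z ∈ boundedBy P F₀) : z ∈ boundedBy P F₀ := by
  obtain ⟨b, hb, h_sub, h_add⟩ := hz
  have h_four : (4 : F) = 2 ^ 2 := by norm_num
  have h_four_mem : (4 : F) ∈ F₀ := by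
    rw [h_four, ← one_add_one_eq_two]
    exact F₀.pow_mem (F₀.add_mem F₀.one_mem F₀.one_mem) 2
  have h_four_ne : (4 : F) ≠ 0 := h_four ▸ pow_ne_zero 2 hP.two_ne_zero
  refine ⟨b / 4, F₀.div_mem hb h_four_mem,
    hP.mem_of_sq_mul_mem hP.two_ne_zero ?_, hP.mem_of_sq_mul_mem hP.two_ne_zero ?_⟩
  · convert h_sub using 1; rw [← h_four]; field_simp
  · convert h_add using 1; rw [← h_four]; field_simp

theorem mul_mem {a a' : F} (ha : a ∈ boundedBy P F₀) (ha' : a' ∈ boundedBy P F₀) :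
    a * a' ∈ boundedBy P F₀ := by
  have h_plus := sq_mem hP (add_mem hP.add_mem ha ha')
  have h_minus := neg_mem (sq_mem hP (add_mem hP.add_mem ha (neg_mem ha')))
  apply mem_of_four_mul_mem hP
  convert add_mem hP.add_mem h_plus h_minus using 1
  ring

theorem mem_or_inv_mem_of_mem {x : F} (hx : x ∈ P) :
    x ∈ boundedBy P F₀ ∨ x⁻¹ ∈ boundedBy P F₀ := by
  rcases eq_or_ne x 0 with rfl | hx_ne
  · exact .inl (zero_mem hP)
  rcases hP.mem_or_neg_mem (1 - x) with h | h
  · exact .inl (mem_of_mem_of_one_sub_mem hP hx h)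
  · have h_one_sub_inv := hP.one_sub_inv_mem hx_ne (by simpa using h)
    exact .inr (mem_of_mem_of_one_sub_mem hP (hP.inv_mem hx) h_one_sub_inv)

theorem mem_or_inv_mem (x : F) : x ∈ boundedBy P F₀ ∨ x⁻¹ ∈ boundedBy P F₀ := by
  rcases hP.mem_or_neg_mem x with h | h
  · exact mem_or_inv_mem_of_mem hP h
  · simpa [inv_neg] using (mem_or_inv_mem_of_mem hP h).imp neg_mem neg_mem

end boundedBy

def IsSemicone_s13.valuationSubring {P : Set F} (hP : IsSemicone_s13 P) (F₀ : Subfield F) :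
    ValuationSubring F where
  carrier := boundedBy P F₀
  zero_mem' := boundedBy.zero_mem hP
  one_mem' := boundedBy.one_mem hP
  add_mem' := boundedBy.add_mem hP.add_mem
  mul_mem' := boundedBy.mul_mem hP
  neg_mem' := boundedBy.neg_mem
  mem_or_inv_mem' := boundedBy.mem_or_inv_mem hP

end

/-- For a semicone `P` of a field `F` (positive cone of a semiordering, with
`a ≤ b ↔ b - a ∈ P`) and a subfield `F₀`, the set
`A = {a : ∃ b ∈ F₀, a ≤ b ∧ -a ≤ b}` is a valuation ring of `F`. -/
theorem stmt13 (F : Type*) [Field F] (P : Set F)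
    (hadd : ∀ a ∈ P, ∀ b ∈ P, a + b ∈ P)
    (hsq : ∀ a ∈ P, ∀ b : F, b ^ 2 * a ∈ P)
    (hone : (1 : F) ∈ P)
    (hanti : P ∩ (-P) = {0})
    (htotal : P ∪ (-P) = Set.univ)
    (F₀ : Subfield F) :
    let A : Set F := {a : F | ∃ b ∈ F₀, b - a ∈ P ∧ b + a ∈ P}
    (0 : F) ∈ A ∧ (1 : F) ∈ A ∧
    (∀ a ∈ A, ∀ b ∈ A, a + b ∈ A) ∧
    (∀ a ∈ A, ∀ b ∈ A, a * b ∈ A) ∧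
    (∀ a ∈ A, -a ∈ A) ∧
    (∀ x : F, x ≠ 0 → x ∈ A ∨ x⁻¹ ∈ A) := by
  let A := (⟨hadd, hsq, hone, hanti, htotal⟩ : IsSemicone_s13 P).valuationSubring F₀
  exact ⟨A.zero_mem, A.one_mem, fun a ha b hb => A.add_mem a b ha hb,
    fun a ha b hb => A.mul_mem a b ha hb, A.neg_mem, fun x _ => A.mem_or_inv_mem x⟩
end

section
/- Let v be a non-trivial valuation of ℝ(X) with formally real residue field whose valuation ring contains ℝ. Then either (a) v is equivalent to the valuation v_t for some t ∈ ℝ, where v_t measures the order of vanishing at t, with residue field isomorphic to ℝ via y ↦ y(t); or (b) v is equivalent to the degree valuation v_∞ defined by v_∞(f/g) = deg g - deg f, with residue field isomorphic to ℝ via y ↦ lim_{t→∞} y(t). -/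
/-!
The hypothesis on the constants makes `v` trivial on `ℝ`. If `v X > 1`, then `v p = (v X) ^ deg p`
for every nonzero polynomial `p`, so `v (p / q)` is governed by `deg p - deg q`: this is `v_∞`.
If `v X ≤ 1`, then `ℝ[X]` lies in the valuation ring, and the polynomials of value `< 1` are
generated by an irreducible `π`. Over `ℝ`, `π` is a unit multiple of `X - t` or of `1 + q ^ 2`,
and the latter would make `-1` a square in the residue field; so `v` is centred at `t`.
In both cases `f` is congruent to its value at the centre, because the numerator of
`f - f(centre)` vanishes at `t`, respectively has smaller degree than the denominator.
-/

open Polynomial Filter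

namespace Valuation

variable {R Γ₀ : Type*} [LinearOrderedCommGroupWithZero Γ₀]

theorem map_algebraMap_eq_of_associated {O : Type*} [CommRing R] [CommRing O] [Algebra O R]
    (v : Valuation R Γ₀) (hle : ∀ x : O, v (algebraMap O R x) ≤ 1) {a b : O}
    (h : Associated a b) : v (algebraMap O R a) = v (algebraMap O R b) := by
  obtain ⟨u, rfl⟩ := h
  rw [map_mul, v.map_mul, Integers.one_of_isUnit' u.isUnit hle, mul_one]

variable [Field R] (v : Valuation R Γ₀) {a b : R}

theorem map_div_le_one_iff (hb : b ≠ 0) : v (a / b) ≤ 1 ↔ v a ≤ v b := by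
  rw [v.map_div, div_le_one₀ (v.pos_iff.mpr hb)]

theorem map_div_lt_one_iff (hb : b ≠ 0) : v (a / b) < 1 ↔ v a < v b := by
  rw [v.map_div, div_lt_one₀ (v.pos_iff.mpr hb)]

end Valuation

namespace RatFunc

variable {K Γ₀ : Type*} [Field K] [LinearOrderedCommGroupWithZero Γ₀] {v : Valuation (RatFunc K) Γ₀}

theorem sub_C_eq_div (f : RatFunc K) (c : K) :
    f - C c = algebraMap K[X] (RatFunc K) (f.num - Polynomial.C c * f.denom) /
      algebraMap K[X] (RatFunc K) f.denom := by
  rw [map_sub, map_mul, sub_div, mul_div_cancel_right₀ _ (algebraMap_ne_zero f.denom_ne_zero),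
    num_div_denom, algebraMap_C]

theorem valuation_le_one_iff_num_le_denom (f : RatFunc K) :
    v f ≤ 1 ↔ v (algebraMap K[X] (RatFunc K) f.num) ≤ v (algebraMap K[X] (RatFunc K) f.denom) := by
  conv_lhs => rw [← f.num_div_denom]
  exact v.map_div_le_one_iff (algebraMap_ne_zero f.denom_ne_zero)

theorem valuation_sub_C_lt_one_iff (f : RatFunc K) (c : K) :
    v (f - C c) < 1 ↔ v (algebraMap K[X] (RatFunc K) (f.num - Polynomial.C c * f.denom)) <
      v (algebraMap K[X] (RatFunc K) f.denom) := by
  rw [sub_C_eq_div]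
  exact v.map_div_lt_one_iff (algebraMap_ne_zero f.denom_ne_zero)

end RatFunc

namespace Polynomial

variable {K Γ₀ : Type*} [Field K] [LinearOrderedCommGroupWithZero Γ₀] {v : Valuation (RatFunc K) Γ₀}
  [v.IsTrivialOn K]

theorem valuation_algebraMap_C_eq_one {c : K} (hc : c ≠ 0) :
    v (algebraMap K[X] (RatFunc K) (C c)) = 1 := by
  rw [RatFunc.algebraMap_C, ← RatFunc.algebraMap_eq_C]
  exact Valuation.IsTrivialOn.eq_one c hc

section Center

variable (hle : v RatFunc.X ≤ 1) {t : K} (ht : v (algebraMap K[X] (RatFunc K) (X - C t)) < 1)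
include hle ht

theorem valuation_lt_one_of_eval_eq_zero {p : K[X]} (hp : p.eval t = 0) :
    v (algebraMap K[X] (RatFunc K) p) < 1 := by
  obtain ⟨q, rfl⟩ := dvd_iff_isRoot.mpr hp
  rw [map_mul, v.map_mul]
  exact mul_lt_one_of_lt_of_le ht (valuation_le_one_of_valuation_X_le_one K hle q)

theorem valuation_eq_one_of_eval_ne_zero {p : K[X]} (hp : p.eval t ≠ 0) :
    v (algebraMap K[X] (RatFunc K) p) = 1 := by
  have hsub : v (algebraMap K[X] (RatFunc K) (p - C (p.eval t))) <
      v (algebraMap K[X] (RatFunc K) (C (p.eval t))) := by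
    rw [valuation_algebraMap_C_eq_one hp]
    exact valuation_lt_one_of_eval_eq_zero hle ht (by simp)
  rw [← sub_add_cancel p (C (p.eval t)), map_add, v.map_add_eq_of_lt_right hsub,
    valuation_algebraMap_C_eq_one hp]

theorem valuation_le_valuation_iff_eval_ne_zero {p q : K[X]} (hpq : IsCoprime p q) :
    v (algebraMap K[X] (RatFunc K) p) ≤ v (algebraMap K[X] (RatFunc K) q) ↔ q.eval t ≠ 0 := by
  by_cases hq : q.eval t = 0
  · have hp : p.eval t ≠ 0 := by simpa [hq] using aeval_ne_zero_of_isCoprime hpq t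
    rw [valuation_eq_one_of_eval_ne_zero hle ht hp]
    exact iff_of_false (not_le.mpr (valuation_lt_one_of_eval_eq_zero hle ht hq)) (not_not.mpr hq)
  · rw [valuation_eq_one_of_eval_ne_zero hle ht hq]
    exact iff_of_true (valuation_le_one_of_valuation_X_le_one K hle p) hq

end Center

section Infinity

variable (hlt : 1 < v RatFunc.X)
include hlt

theorem valuation_lt_valuation_iff_degree_lt {p q : K[X]} (hq : q ≠ 0) :
    v (algebraMap K[X] (RatFunc K) p) < v (algebraMap K[X] (RatFunc K) q) ↔
      p.degree < q.degree := by
  rcases eq_or_ne p 0 with rfl | hp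
  · simp [v.pos_iff, bot_lt_iff_ne_bot, hq]
  rw [← RatFunc.coePolynomial_eq_algebraMap, ← RatFunc.coePolynomial_eq_algebraMap,
    valuation_eq_valuation_X_pow_natDegree_of_one_lt_valuation_X K hlt hp,
    valuation_eq_valuation_X_pow_natDegree_of_one_lt_valuation_X K hlt hq,
    pow_lt_pow_iff_right₀ hlt, natDegree_lt_natDegree_iff hp]

theorem valuation_le_valuation_iff_degree_le {p q : K[X]} :
    v (algebraMap K[X] (RatFunc K) p) ≤ v (algebraMap K[X] (RatFunc K) q) ↔
      p.degree ≤ q.degree := by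
  rcases eq_or_ne p 0 with rfl | hp
  · simp
  rw [← not_lt, ← not_lt, valuation_lt_valuation_iff_degree_lt hlt hp]

end Infinity

end Polynomial

/-- A complex root `z` of `p` yields the factor `X - re z` if `z` is real, and
`(X - re z) ^ 2 + (im z) ^ 2` otherwise. -/
theorem Irreducible.associated_X_sub_C_or_one_add_sq {p : ℝ[X]} (hp : Irreducible p) :
    (∃ t, Associated p (X - C t)) ∨ ∃ q : ℝ[X], Associated p (1 + q ^ 2) := by
  obtain ⟨z, hz⟩ : ∃ z : ℂ, aeval z p = 0 :=
    IsAlgClosed.exists_aeval_eq_zero _ p (degree_pos_of_irreducible hp).ne'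
  rcases eq_or_ne z.im 0 with him | him
  · refine .inl ⟨z.re, (hp.dvd_iff.mp ?_).resolve_left (not_isUnit_X_sub_C _)⟩
    have hz' : z = algebraMap ℝ ℂ z.re := Complex.ext rfl (by simp [him])
    rw [hz', aeval_algebraMap_apply_eq_algebraMap_eval, map_eq_zero] at hz
    exact dvd_iff_isRoot.mpr hz
  · set q : ℝ[X] := C z.im⁻¹ * (X - C z.re)
    have hquad : X ^ 2 - C (2 * z.re) * X + C (‖z‖ ^ 2) = C (z.im ^ 2) * (1 + q ^ 2) := by
      have hinv : C z.im ^ 2 * C z.im⁻¹ ^ 2 = 1 := by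
        rw [← mul_pow, ← C_mul, mul_inv_cancel₀ him, C_1, one_pow]
      rw [Complex.sq_norm, Complex.normSq_apply]
      simp only [q, map_add, map_mul, map_pow, map_ofNat]
      linear_combination (-(X - C z.re) ^ 2) * hinv
    have hdvd := p.quadratic_dvd_of_aeval_eq_zero_im_ne_zero hz him
    refine .inr ⟨q, (hp.dvd_iff.mp (dvd_trans (Dvd.intro_left _ hquad.symm) hdvd)).resolve_left
      fun hunit => ?_⟩
    have hdeg := (isMonicOfDegree_sub_add_two (2 * z.re) (‖z‖ ^ 2)).natDegree_eq
    refine not_isUnit_of_natDegree_pos _ (hdeg ▸ two_pos) ?_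
    exact hquad ▸ (isUnit_C.mpr (pow_ne_zero 2 him).isUnit).mul hunit

theorem Polynomial.exists_tendsto_div_and_degree_sub_lt {P Q : ℝ[X]} (hQ : Q ≠ 0)
    (hPQ : P.degree ≤ Q.degree) :
    ∃ L : ℝ, Tendsto (fun x => P.eval x / Q.eval x) atTop (nhds L) ∧
      (P - C L * Q).degree < Q.degree := by
  rcases hPQ.lt_or_eq with hlt | heq
  · exact ⟨0, div_tendsto_atTop_zero_of_degree_lt P Q hlt, by simpa using hlt⟩
  · refine ⟨_, div_tendsto_atTop_leadingCoeff_div_of_degree_eq P Q heq, ?_⟩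
    have hP : P ≠ 0 := by rintro rfl; exact hQ (degree_eq_bot.mp (by simpa using heq.symm))
    have hL : P.leadingCoeff / Q.leadingCoeff ≠ 0 := by simp [hP, hQ]
    rw [← heq]
    refine degree_sub_lt_left (by rw [degree_C_mul hL, heq]) hP ?_
    rw [leadingCoeff_mul, leadingCoeff_C, div_mul_cancel₀ _ (leadingCoeff_ne_zero.mpr hQ)]

theorem Polynomial.exists_valuation_X_sub_C_lt_one {Γ₀ : Type*} [LinearOrderedCommGroupWithZero Γ₀]
    {v : Valuation (RatFunc ℝ) Γ₀} [v.IsNontrivial] [v.IsTrivialOn ℝ] (hle : v RatFunc.X ≤ 1)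
    (hreal : ∀ a : RatFunc ℝ, v a ≤ 1 → ¬ v (1 + a ^ 2) < 1) :
    ∃ t : ℝ, v (algebraMap ℝ[X] (RatFunc ℝ) (X - C t)) < 1 := by
  have hint : ∀ p : ℝ[X], v (algebraMap ℝ[X] (RatFunc ℝ) p) ≤ 1 :=
    valuation_le_one_of_valuation_X_le_one ℝ hle
  have hπ := RatFunc.irreducible_min_polynomial_valuation_lt_one_and_ne_zero
    (RatFunc.setOfPred_polynomial_valuation_lt_one_and_ne_zero_nonempty hle)
  have hvπ := RatFunc.valuation_uniformizingPolynomial_lt_one hle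
  rcases hπ.associated_X_sub_C_or_one_add_sq with ⟨t, ht⟩ | ⟨q, hq⟩
  · exact ⟨t, v.map_algebraMap_eq_of_associated hint ht ▸ hvπ⟩
  · refine absurd ?_ (hreal _ (hint q))
    have hvq := v.map_algebraMap_eq_of_associated hint hq ▸ hvπ
    simpa using hvq

theorem stmt14_general {Γ₀ : Type*} [LinearOrderedCommGroupWithZero Γ₀]
    (v : Valuation (RatFunc ℝ) Γ₀)
    (hnontriv : ∃ x : RatFunc ℝ, x ≠ 0 ∧ v x ≠ 1)
    (hR : ∀ r : ℝ, v (RatFunc.C r) ≤ 1)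
    (hreal : ¬ ∃ (m : ℕ) (a : Fin m → RatFunc ℝ),
      (∀ i, v (a i) ≤ 1) ∧ v (1 + ∑ i, (a i) ^ 2) < 1) :
    (∃ t : ℝ,
      (∀ f : RatFunc ℝ, v f ≤ 1 ↔ f.denom.eval t ≠ 0) ∧
      (∀ f : RatFunc ℝ, v f ≤ 1 →
        v (f - RatFunc.C ((f.num.eval t) / (f.denom.eval t))) < 1)) ∨
    ((∀ f : RatFunc ℝ, v f ≤ 1 ↔ f.num.degree ≤ f.denom.degree) ∧
      (∀ f : RatFunc ℝ, v f ≤ 1 → ∃ L : ℝ,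
        Tendsto (fun x : ℝ => (f.num.eval x) / (f.denom.eval x)) atTop (nhds L) ∧
        v (f - RatFunc.C L) < 1)) := by
  have : v.IsTrivialOn ℝ := .of_le_one v fun r => RatFunc.algebraMap_eq_C (K := ℝ) ▸ hR r
  rcases le_or_gt (v RatFunc.X) 1 with hle | hlt
  · have : v.IsNontrivial := by
      obtain ⟨x, hx0, hx1⟩ := hnontriv
      exact ⟨x, v.ne_zero_iff.mpr hx0, hx1⟩
    obtain ⟨t, ht⟩ := exists_valuation_X_sub_C_lt_one hle fun a ha hlt =>
      hreal ⟨1, fun _ => a, fun _ => ha, by simpa using hlt⟩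
    have hden (f : RatFunc ℝ) : v f ≤ 1 ↔ f.denom.eval t ≠ 0 :=
      (RatFunc.valuation_le_one_iff_num_le_denom f).trans
        (valuation_le_valuation_iff_eval_ne_zero hle ht f.isCoprime_num_denom)
    refine .inl ⟨t, hden, fun f hf => ?_⟩
    have hft := (hden f).mp hf
    rw [RatFunc.valuation_sub_C_lt_one_iff, valuation_eq_one_of_eval_ne_zero hle ht hft]
    exact valuation_lt_one_of_eval_eq_zero hle ht (by simp [div_mul_cancel₀ _ hft])
  · have hdeg (f : RatFunc ℝ) : v f ≤ 1 ↔ f.num.degree ≤ f.denom.degree :=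
      (RatFunc.valuation_le_one_iff_num_le_denom f).trans (valuation_le_valuation_iff_degree_le hlt)
    refine .inr ⟨hdeg, fun f hf => ?_⟩
    obtain ⟨L, hL, hsub⟩ := exists_tendsto_div_and_degree_sub_lt f.denom_ne_zero ((hdeg f).mp hf)
    exact ⟨L, hL, (RatFunc.valuation_sub_C_lt_one_iff f L).mpr
      ((valuation_lt_valuation_iff_degree_lt hlt f.denom_ne_zero).mpr hsub)⟩

/-- Classification of non-trivial real places of ℝ(X) whose valuation ring contains ℝ:
either the valuation ring is that of the order-of-vanishing valuation `v_t` at some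
`t : ℝ` (with residue map given by evaluation at `t`), or it is that of the degree
valuation `v_∞` (with residue map given by the limit at infinity).
Equivalence of valuations is expressed via equality of valuation rings, the
residue-field isomorphism with ℝ via the stated map, and formal reality of the
residue field via sums of squares of integral elements. -/
theorem stmt14 {Γ₀ : Type*} [LinearOrderedCommGroupWithZero Γ₀]
    (v : Valuation (RatFunc ℝ) Γ₀)
    (hsurj : Function.Surjective v)
    (hnontriv : ∃ x : RatFunc ℝ, x ≠ 0 ∧ v x ≠ 1)
    (hR : ∀ r : ℝ, v (RatFunc.C r) ≤ 1)
    (hreal : ¬ ∃ (m : ℕ) (a : Fin m → RatFunc ℝ),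
      (∀ i, v (a i) ≤ 1) ∧ v (1 + ∑ i, (a i) ^ 2) < 1) :
    (∃ t : ℝ,
      (∀ f : RatFunc ℝ, v f ≤ 1 ↔ f.denom.eval t ≠ 0) ∧
      (∀ f : RatFunc ℝ, v f ≤ 1 →
        v (f - RatFunc.C ((f.num.eval t) / (f.denom.eval t))) < 1)) ∨
    ((∀ f : RatFunc ℝ, v f ≤ 1 ↔ f.num.degree ≤ f.denom.degree) ∧
      (∀ f : RatFunc ℝ, v f ≤ 1 → ∃ L : ℝ,
        Tendsto (fun x : ℝ => (f.num.eval x) / (f.denom.eval x)) atTop (nhds L) ∧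
        v (f - RatFunc.C L) < 1)) :=
  stmt14_general v hnontriv hR hreal
end

section
/- Let 𝒢 be a finite subset of a group G. The identity element of G lies in the semigroup generated by 𝒢 if and only if some non-empty subset C ⊆ 𝒢 generates (as a semigroup) a subgroup of G. -/
/-!
Write `1 = g₁ ⋯ gₙ` with `gᵢ ∈ 𝒢` and let `C = {g₁, …, gₙ}`. Each `gᵢ` is a factor `u gᵢ v = 1`
of this word, so `gᵢ⁻¹ = v u` is again a product of letters of `C`. Conversely, `c c⁻¹ = 1`
for any `c ∈ C`.
-/

namespace Subsemigroup

variable {M : Type*}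

section Monoid

variable [Monoid M]

theorem closure_le_toSubsemigroup_submonoidClosure (s : Set M) :
    closure s ≤ (Submonoid.closure s).toSubsemigroup :=
  closure_le.mpr Submonoid.subset_closure

theorem coe_submonoidClosure_of_one_mem {s : Set M} (h : (1 : M) ∈ closure s) :
    (Submonoid.closure s : Set M) = closure s := by
  rw [Submonoid.closure_eq_one_union, Set.singleton_union, Set.insert_eq_of_mem h]

theorem exists_finset_forall_factor {s : Set M} {x : M} (hx : x ∈ closure s) :
    ∃ C : Finset M, (C : Set M) ⊆ s ∧ C.Nonempty ∧ x ∈ closure (C : Set M) ∧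
      ∀ c ∈ C, ∃ u ∈ Submonoid.closure (C : Set M), ∃ v ∈ Submonoid.closure (C : Set M),
        u * c * v = x := by
  classical
  induction hx using closure_induction with
  | mem y hy =>
    refine ⟨{y}, by simpa using hy, Finset.singleton_nonempty y,
      subset_closure (by simp), fun c hc => ⟨1, one_mem _, 1, one_mem _, ?_⟩⟩
    simp [Finset.mem_singleton.mp hc]
  | mul y z _ _ ihy ihz =>
    obtain ⟨A, hAs, hA, hyA, hfacA⟩ := ihy
    obtain ⟨B, hBs, -, hzB, hfacB⟩ := ihz
    have hA_le : (A : Set M) ⊆ ↑(A ∪ B) := by simp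
    have hB_le : (B : Set M) ⊆ ↑(A ∪ B) := by simp
    have hy : y ∈ Submonoid.closure (↑(A ∪ B) : Set M) :=
      Submonoid.closure_mono hA_le (closure_le_toSubsemigroup_submonoidClosure _ hyA)
    have hz : z ∈ Submonoid.closure (↑(A ∪ B) : Set M) :=
      Submonoid.closure_mono hB_le (closure_le_toSubsemigroup_submonoidClosure _ hzB)
    refine ⟨A ∪ B, by simpa using ⟨hAs, hBs⟩, hA.mono Finset.subset_union_left,
      mul_mem (closure_mono hA_le hyA) (closure_mono hB_le hzB), fun c hc => ?_⟩
    rcases Finset.mem_union.mp hc with hcA | hcB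
    · obtain ⟨u, hu, v, hv, rfl⟩ := hfacA c hcA
      exact ⟨u, Submonoid.closure_mono hA_le hu,
        v * z, mul_mem (Submonoid.closure_mono hA_le hv) hz, by group⟩
    · obtain ⟨u, hu, v, hv, rfl⟩ := hfacB c hcB
      exact ⟨y * u, mul_mem hy (Submonoid.closure_mono hB_le hu),
        v, Submonoid.closure_mono hB_le hv, by group⟩

end Monoid

section Group

variable [Group M] {s : Set M}

theorem inv_mem_closure_of_mul_mul_eq_one (h1 : (1 : M) ∈ closure s) {u c v : M}
    (hu : u ∈ Submonoid.closure s) (hv : v ∈ Submonoid.closure s) (h : u * c * v = 1) :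
    c⁻¹ ∈ closure s := by
  have hinv : c⁻¹ = v * u := by
    rw [mul_assoc, mul_eq_one_comm, mul_assoc] at h
    exact inv_eq_of_mul_eq_one_right h
  rw [hinv, ← SetLike.mem_coe, ← coe_submonoidClosure_of_one_mem h1]
  exact mul_mem hv hu

theorem forall_inv_mem_closure (hs : ∀ c ∈ s, c⁻¹ ∈ closure s) :
    ∀ x ∈ closure s, x⁻¹ ∈ closure s := by
  intro x hx
  induction hx using closure_induction with
  | mem c hc => exact hs c hc
  | mul y z _ _ hy hz => simpa only [mul_inv_rev] using mul_mem hz hy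

theorem one_mem_closure_of_inv_mem {x : M} (hx : x ∈ closure s) (hx' : x⁻¹ ∈ closure s) :
    (1 : M) ∈ closure s := by
  simpa using mul_mem hx hx'

end Group

end Subsemigroup

/-- The identity of a group lies in the semigroup generated by a finite set 𝒢 iff
some non-empty subset C of 𝒢 generates (as a semigroup) a subgroup. -/
theorem stmt17 (G : Type*) [Group G] (𝒢 : Finset G) :
    (1 : G) ∈ Subsemigroup.closure (𝒢 : Set G) ↔
    ∃ C : Finset G, C ⊆ 𝒢 ∧ C.Nonempty ∧
      ∀ x ∈ Subsemigroup.closure (C : Set G),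
        x⁻¹ ∈ Subsemigroup.closure (C : Set G) := by
  constructor
  · intro h1
    obtain ⟨C, hC𝒢, hC, h1C, hfac⟩ := Subsemigroup.exists_finset_forall_factor h1
    refine ⟨C, by exact_mod_cast hC𝒢, hC, Subsemigroup.forall_inv_mem_closure fun c hc => ?_⟩
    obtain ⟨u, hu, v, hv, huv⟩ := hfac c hc
    exact Subsemigroup.inv_mem_closure_of_mul_mul_eq_one h1C hu hv huv
  · rintro ⟨C, hC𝒢, ⟨c, hc⟩, hinv⟩
    have hcC : c ∈ Subsemigroup.closure (C : Set G) := Subsemigroup.subset_closure hc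
    exact Subsemigroup.closure_mono (by exact_mod_cast hC𝒢)
      (Subsemigroup.one_mem_closure_of_inv_mem hcC (hinv c hcC))
end
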